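/- arXiv:1403.0984 — 5 statements merged into one kernel-verified Lean document; each statement's English description precedes it below -/
import Mathlib

section
/- For a ∈ C nonzero, and for polynomials f_i(a;z) := (z+a)^i((i+1-n)z - na)/(i+1)! with 0 ≤ i,j ≤ 2n-1 and i+j ≥ 2n, one has [f_i(a;z), f_j(-a;z)] = 0, where [·,·] is the symplectic form on the space V of polynomials of degree at most 2n with vanishing middle coefficient. -/
open Polynomial

/-- The symplectic form `[f,g] = Σ_{k=-n, k≠0}^{n} (1/k) a_k b_{-k}` where
`f = Σ a_k z^{n+k}/(n+k)!` and `g = Σ b_k z^{n+k}/(n+k)!`, written in terms of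
ordinary coefficients (`j = n + k`). -/
noncomputable def symForm (n : ℕ) (f g : Polynomial ℂ) : ℂ :=
  ∑ j ∈ Finset.range (2 * n + 1),
    if j = n then 0
    else ((j : ℂ) - (n : ℂ))⁻¹ * ((j.factorial : ℂ) * f.coeff j) *
      (((2 * n - j).factorial : ℂ) * g.coeff (2 * n - j))

/-- The polynomial `f_i(a;z) = (z+a)^i((i+1-n)z - na)/(i+1)!`. -/
noncomputable def fPoly (n i : ℕ) (a : ℂ) : Polynomial ℂ :=
  Polynomial.C (((i + 1).factorial : ℂ))⁻¹ *
    ((Polynomial.X + Polynomial.C a) ^ i *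
      (Polynomial.C ((i : ℂ) + 1 - (n : ℂ)) * Polynomial.X - Polynomial.C ((n : ℂ) * a)))

lemma alt1 (K : ℕ) (hK : 1 ≤ K) :
    ∑ m ∈ Finset.range (K+1), (-1:ℂ)^m * (K.choose m) = 0 := by
  have h := Int.alternating_sum_range_choose_of_ne (n := K) (by omega)
  have := congrArg (Int.cast : ℤ → ℂ) h
  push_cast at this
  simpa using this

lemma altA (N : ℕ) (hN : 2 ≤ N) (c : ℂ) :
    ∑ m ∈ Finset.range (N+1), (c - m) * (-1)^m * (N.choose m) = 0 := by
  have split : ∀ m : ℕ, (c - (m:ℂ)) * (-1)^m * (N.choose m)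
      = c * ((-1)^m * (N.choose m)) - (m:ℂ) * (-1)^m * (N.choose m) := by
    intro m; ring
  rw [Finset.sum_congr rfl (fun m _ => split m), Finset.sum_sub_distrib, ← Finset.mul_sum,
    alt1 N (by omega), mul_zero, zero_sub, neg_eq_zero]
  -- ∑ m(-1)^m C(N,m) = 0
  obtain ⟨K, rfl⟩ : ∃ K, N = K + 1 := ⟨N - 1, by omega⟩
  rw [Finset.sum_range_succ']
  simp only [Nat.cast_zero, zero_mul, add_zero]
  have step : ∀ m : ℕ, ((m+1 : ℕ):ℂ) * (-1)^(m+1) * ((K+1).choose (m+1))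
      = (-(K+1)) * ((-1)^m * (K.choose m)) := by
    intro m
    have h := Nat.add_one_mul_choose_eq K m
    have h2 := congrArg (Nat.cast : ℕ → ℂ) h
    push_cast at h2 ⊢
    linear_combination (-(1:ℂ))^m * h2
  rw [Finset.sum_congr rfl (fun m _ => step m), ← Finset.mul_sum, alt1 K (by omega), mul_zero]

lemma choose_id (n i q : ℕ) :
    ((q:ℂ) + 1 - n) * ((i+1).choose (q+1)) =
      ((i:ℂ) + 1 - n) * (i.choose q) - (n:ℂ) * (i.choose (q+1)) := by
  have h1 := congrArg (Nat.cast (R := ℂ)) (Nat.add_one_mul_choose_eq i q)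
  have h2 := congrArg (Nat.cast (R := ℂ)) (Nat.choose_succ_succ i q)
  simp only [Nat.succ_eq_add_one] at h1 h2
  push_cast at h1 h2
  linear_combination -h1 - (n:ℂ) * h2

lemma fPoly_coeff (n i : ℕ) (a : ℂ) (p : ℕ) :
    (fPoly n i a).coeff p =
      ((p:ℂ) - n) * ((i+1).choose p : ℂ) * a^(i+1-p) * (((i+1).factorial : ℂ))⁻¹ := by
  have hexp : (X + C a)^i * (C ((i:ℂ) + 1 - n) * X - C ((n:ℂ) * a)) =
      C ((i:ℂ) + 1 - n) * ((X + C a)^i * X) - C ((n:ℂ) * a) * (X + C a)^i := by ring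
  rw [fPoly, coeff_C_mul, hexp, coeff_sub, coeff_C_mul, coeff_C_mul]
  cases p with
  | zero =>
    have h0 : ((X + C a)^i * X).coeff 0 = 0 := by
      simp [coeff_mul_X_zero, mul_comm, coeff_X_mul]
    rw [h0, coeff_X_add_C_pow]
    simp
    ring
  | succ q =>
    rw [coeff_mul_X, coeff_X_add_C_pow, coeff_X_add_C_pow]
    rcases le_or_gt (q+1) i with h | h
    · have hpow : a * a ^ (i - (q+1)) = a ^ (i - q) := by
        rw [← pow_succ']
        congr 1
        omega
      have hiq : i + 1 - (q + 1) = i - q := by omega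
      rw [hiq]
      push_cast
      linear_combination (-(((i+1).factorial : ℂ))⁻¹ * a^(i-q)) * choose_id n i q
        - (((i+1).factorial : ℂ))⁻¹ * (n:ℂ) * ((i.choose (q+1) : ℕ) : ℂ) * hpow
    · have hc1' : ((i.choose (q+1) : ℕ) : ℂ) = 0 := by
        rw [Nat.choose_eq_zero_of_lt h]; simp
      have hiq : i + 1 - (q + 1) = i - q := by omega
      rw [hiq]
      push_cast
      linear_combination (-(((i+1).factorial : ℂ))⁻¹ * a^(i-q)) * choose_id n i q
        + (((i+1).factorial : ℂ))⁻¹ * (n:ℂ) * (a^(i-q) - a * a^(i-(q+1))) * hc1'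

noncomputable def Eaux (n i j : ℕ) (a : ℂ) (p : ℕ) : ℂ :=
  ((n : ℂ) - p) *
    (((i+1).choose p : ℂ) * a ^ (i + 1 - p) * (p.factorial : ℂ) * (((i+1).factorial : ℂ))⁻¹) *
    (((j+1).choose (2*n - p) : ℂ) * (-a) ^ (j + 1 - (2*n - p)) * ((2*n - p).factorial : ℂ) *
      (((j+1).factorial : ℂ))⁻¹)

lemma Eaux_term (n i j : ℕ) (a : ℂ) (ha : a ≠ 0) (hn : 1 ≤ n)
    (hi : i ≤ 2 * n - 1) (hj : j ≤ 2 * n - 1) (hij : 2 * n ≤ i + j)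
    (m : ℕ) (hmN : m ≤ i + j + 2 - 2 * n) :
    Eaux n i j a (2 * n - j - 1 + m) =
      (a ^ (i + j + 2 - 2 * n) * (((i + j + 2 - 2 * n).factorial : ℂ))⁻¹) *
        ((((j : ℂ) + 1 - n) - m) * (-1) ^ m * ((i + j + 2 - 2 * n).choose m)) := by
  set lo := 2 * n - j - 1 with hlo
  set N := i + j + 2 - 2 * n with hNdef
  have h1 : i + 1 - (lo + m) = N - m := by omega
  have h2 : 2 * n - (lo + m) = j + 1 - m := by omega
  have h3 : j + 1 - (j + 1 - m) = m := by omega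
  rw [Eaux, h1, h2, h3]
  have hC1 := Nat.choose_mul_factorial_mul_factorial (show lo + m ≤ i + 1 by omega)
  rw [h1] at hC1
  have hC2 := Nat.choose_mul_factorial_mul_factorial (show j + 1 - m ≤ j + 1 by omega)
  rw [h3] at hC2
  have hC3 := Nat.choose_mul_factorial_mul_factorial hmN
  have hu : (((lo+m).factorial : ℕ) : ℂ) ≠ 0 := Nat.cast_ne_zero.mpr (Nat.factorial_ne_zero _)
  have hv : (((N-m).factorial : ℕ) : ℂ) ≠ 0 := Nat.cast_ne_zero.mpr (Nat.factorial_ne_zero _)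
  have hw : (((j+1-m).factorial : ℕ) : ℂ) ≠ 0 := Nat.cast_ne_zero.mpr (Nat.factorial_ne_zero _)
  have hx : ((m.factorial : ℕ) : ℂ) ≠ 0 := Nat.cast_ne_zero.mpr (Nat.factorial_ne_zero _)
  have hF1 : (((i+1).factorial : ℕ) : ℂ) ≠ 0 := Nat.cast_ne_zero.mpr (Nat.factorial_ne_zero _)
  have hF2 : (((j+1).factorial : ℕ) : ℂ) ≠ 0 := Nat.cast_ne_zero.mpr (Nat.factorial_ne_zero _)
  have hFN : ((N.factorial : ℕ) : ℂ) ≠ 0 := Nat.cast_ne_zero.mpr (Nat.factorial_ne_zero _)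
  have c1 : (((i+1).choose (lo+m) : ℕ) : ℂ)
      = ((i+1).factorial : ℂ) * (((lo+m).factorial : ℂ))⁻¹ * (((N-m).factorial : ℂ))⁻¹ := by
    have h := congrArg (Nat.cast (R := ℂ)) hC1
    push_cast at h
    rw [← h]
    field_simp
  have c2 : (((j+1).choose (j+1-m) : ℕ) : ℂ)
      = ((j+1).factorial : ℂ) * (((j+1-m).factorial : ℂ))⁻¹ * ((m.factorial : ℂ))⁻¹ := by
    have h := congrArg (Nat.cast (R := ℂ)) hC2
    push_cast at h
    rw [← h]
    field_simp
  have c3 : ((N.choose m : ℕ) : ℂ)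
      = (N.factorial : ℂ) * ((m.factorial : ℂ))⁻¹ * (((N-m).factorial : ℂ))⁻¹ := by
    have h := congrArg (Nat.cast (R := ℂ)) hC3
    push_cast at h
    rw [← h]
    field_simp
  have hlocast : ((lo : ℕ) : ℂ) = 2 * n - j - 1 := by
    have h : lo + (j + 1) = 2 * n := by omega
    have h2 : ((lo : ℕ) : ℂ) + (j + 1) = 2 * n := by exact_mod_cast congrArg (Nat.cast (R := ℂ)) h
    linear_combination h2
  have hpow2 : a ^ N = a ^ (N - m) * a ^ m := by
    rw [← pow_add]
    congr 1
    omega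
  rw [c1, c2, c3, neg_pow]
  push_cast
  rw [hlocast, hpow2]
  field_simp
  ring

/-- For `a ≠ 0` and `0 ≤ i, j ≤ 2n-1` with `i + j ≥ 2n`, one has
`[f_i(a;z), f_j(-a;z)] = 0`. -/
theorem symForm_fPoly_eq_zero (n : ℕ) (hn : 1 ≤ n) (a : ℂ) (ha : a ≠ 0)
    (i j : ℕ) (hi : i ≤ 2 * n - 1) (hj : j ≤ 2 * n - 1) (hij : 2 * n ≤ i + j) :
    symForm n (fPoly n i a) (fPoly n j (-a)) = 0 := by
  have hN2 : 2 ≤ i + j + 2 - 2 * n := by omega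
  have key : ∀ p ∈ Finset.range (2*n+1),
      (if p = n then 0
        else ((p : ℂ) - (n : ℂ))⁻¹ * ((p.factorial : ℂ) * (fPoly n i a).coeff p) *
          (((2 * n - p).factorial : ℂ) * (fPoly n j (-a)).coeff (2 * n - p))) = Eaux n i j a p := by
    intro p hp
    simp only [Finset.mem_range] at hp
    have hple : p ≤ 2 * n := by omega
    rw [fPoly_coeff, fPoly_coeff, Eaux]
    by_cases hpn : p = n
    · rw [if_pos hpn]
      subst hpn
      simp
    · rw [if_neg hpn]
      have hne : ((p : ℂ) - n) ≠ 0 := by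
        intro h
        exact hpn (by exact_mod_cast sub_eq_zero.mp h)
      have hq : (((2*n - p : ℕ) : ℂ)) = 2 * n - p := by
        push_cast [Nat.cast_sub hple]
        ring
      rw [hq]
      have hF1 : (((i+1).factorial : ℕ) : ℂ) ≠ 0 := Nat.cast_ne_zero.mpr (Nat.factorial_ne_zero _)
      have hF2 : (((j+1).factorial : ℕ) : ℂ) ≠ 0 := Nat.cast_ne_zero.mpr (Nat.factorial_ne_zero _)
      field_simp [hne, hF1, hF2]
      ring
  rw [symForm, Finset.sum_congr rfl key]
  have hsub : Finset.Ico (2*n-j-1) (i+2) ⊆ Finset.range (2*n+1) := by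
    intro x hx
    rw [Finset.mem_Ico] at hx
    rw [Finset.mem_range]
    omega
  have hz : ∀ p ∈ Finset.range (2*n+1), p ∉ Finset.Ico (2*n-j-1) (i+2) → Eaux n i j a p = 0 := by
    intro p hp hnot
    rw [Finset.mem_Ico] at hnot
    push_neg at hnot
    rw [Eaux]
    by_cases h : p < 2*n-j-1
    · have h0 : (j+1).choose (2*n - p) = 0 := Nat.choose_eq_zero_of_lt (by omega)
      simp [h0]
    · have h0 : (i+1).choose p = 0 := Nat.choose_eq_zero_of_lt (by omega)
      simp [h0]
  rw [← Finset.sum_subset hsub hz, Finset.sum_Ico_eq_sum_range]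
  rw [show i + 2 - (2*n-j-1) = (i + j + 2 - 2*n) + 1 by omega]
  rw [Finset.sum_congr rfl (fun m hm => Eaux_term n i j a ha hn hi hj hij m
      (by rw [Finset.mem_range] at hm; omega))]
  rw [← Finset.mul_sum, altA _ hN2 ((j : ℂ) + 1 - n), mul_zero]
end

section
/- If p(z) = (z+1)^{n-i}(z-1)^i with 0 ≤ i ≤ n, then the middle coefficient of p(z)^2 is nonzero: [z^n](p(z)^2) ≠ 0. -/
open Polynomial

lemma key (b a : ℕ) :
    (((X + 1) ^ (2*a) * (X - 1) ^ (2*b) : Polynomial ℂ)).coeff (a + b) *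
      ((a.factorial : ℂ) * b.factorial * (a+b).factorial) =
    (-1)^b * ((2*a).factorial * (2*b).factorial : ℂ) := by
  induction b generalizing a with
  | zero =>
      simp only [Nat.mul_zero, pow_zero, mul_one, Nat.add_zero, Nat.factorial_zero,
        Nat.cast_one, coeff_X_add_one_pow]
      have h := Nat.choose_mul_factorial_mul_factorial (Nat.le_mul_of_pos_left a (by norm_num) : a ≤ 2*a)
      have : (2*a - a) = a := by omega
      rw [this] at h
      push_cast [← h]
      ring
  | succ b ih =>
      have h4 : (C (4:ℂ)) = (4 : Polynomial ℂ) := map_ofNat C 4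
      have hpoly : ((X + 1) ^ (2*a) * (X - 1) ^ (2*(b+1)) : Polynomial ℂ) =
          (X + 1) ^ (2*(a+1)) * (X - 1) ^ (2*b) - (C 4) * (X * ((X + 1) ^ (2*a) * (X - 1) ^ (2*b))) := by
        rw [h4]
        have e1 : 2*(b+1) = 2*b + 2 := by ring
        have e2 : 2*(a+1) = 2*a + 2 := by ring
        rw [e1, e2, pow_add, pow_add]
        ring
      have hc : (((X + 1) ^ (2*a) * (X - 1) ^ (2*(b+1)) : Polynomial ℂ)).coeff (a + (b+1)) =
          (((X + 1) ^ (2*(a+1)) * (X - 1) ^ (2*b) : Polynomial ℂ)).coeff ((a+1) + b)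
          - 4 * (((X + 1) ^ (2*a) * (X - 1) ^ (2*b) : Polynomial ℂ)).coeff (a + b) := by
        rw [hpoly, coeff_sub, coeff_C_mul]
        have : a + (b+1) = (a + b) + 1 := by ring
        rw [this, coeff_X_mul]
        congr 2
        omega
      have hA := ih (a+1)
      have hB := ih a
      have fa : ((a+1).factorial : ℂ) = (a+1) * a.factorial := by push_cast [Nat.factorial_succ]; ring
      have fab : (((a+1)+b).factorial : ℂ) = (a+b+1) * (a+b).factorial := by
        have : (a+1)+b = (a+b)+1 := by ring
        rw [this]; push_cast [Nat.factorial_succ]; ring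
      have fb : ((b+1).factorial : ℂ) = (b+1) * b.factorial := by push_cast [Nat.factorial_succ]; ring
      have f2a : ((2*(a+1)).factorial : ℂ) = (2*a+2)*(2*a+1)*(2*a).factorial := by
        have : 2*(a+1) = (2*a+1)+1 := by ring
        rw [this]; push_cast [Nat.factorial_succ]; ring
      have f2b : ((2*(b+1)).factorial : ℂ) = (2*b+2)*(2*b+1)*(2*b).factorial := by
        have : 2*(b+1) = (2*b+1)+1 := by ring
        rw [this]; push_cast [Nat.factorial_succ]; ring
      have fab2 : ((a+(b+1)).factorial : ℂ) = (a+b+1) * (a+b).factorial := by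
        have : a+(b+1) = (a+b)+1 := by ring
        rw [this]; push_cast [Nat.factorial_succ]; ring
      rw [fa, fab, f2a] at hA
      have ha1 : ((a:ℂ)+1) ≠ 0 := by
        have : ((a:ℂ)+1) = ((a+1 : ℕ) : ℂ) := by push_cast; ring
        rw [this]; exact Nat.cast_ne_zero.mpr (by omega)
      rw [hc, fb, fab2, f2b]
      apply mul_left_cancel₀ ha1
      linear_combination (((b:ℂ)+1)) * hA - (4*((a:ℂ)+1)*((b:ℂ)+1)*((a:ℂ)+(b:ℂ)+1)) * hB

/-- If `p(z) = (z+1)^{n-i}(z-1)^i` with `0 ≤ i ≤ n`, then the middle coefficient of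
`p(z)^2` is nonzero: `[z^n](p(z)^2) ≠ 0`. -/
theorem middle_coeff_sq_ne_zero (n i : ℕ) (hi : i ≤ n) :
    (((Polynomial.X + 1) ^ (n - i) * (Polynomial.X - 1) ^ i : Polynomial ℂ) ^ 2).coeff n ≠ 0 := by
  have e : (((X + 1) ^ (n - i) * (X - 1) ^ i : Polynomial ℂ)) ^ 2 =
      (X + 1) ^ (2*(n-i)) * (X - 1) ^ (2*i) := by
    rw [mul_pow, ← pow_mul, ← pow_mul]; ring_nf
  have hn : (n - i) + i = n := by omega
  have h := key i (n - i)
  rw [hn] at h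
  rw [e]
  intro h0
  rw [h0, zero_mul] at h
  have h1 : ((-1:ℂ))^i * ((2*(n-i)).factorial * (2*i).factorial : ℂ) ≠ 0 := by
    apply mul_ne_zero
    · exact pow_ne_zero _ (by norm_num)
    · exact mul_ne_zero (Nat.cast_ne_zero.mpr (Nat.factorial_ne_zero _))
        (Nat.cast_ne_zero.mpr (Nat.factorial_ne_zero _))
  exact h1 h.symm
end

section
/- Let V be a 2n-dimensional complex symplectic vector space with symplectic form [·,·], and let x ⊂ V be a Lagrangian subspace (x = x^⊥). Let G_• and H_• be complete flags in V with G_i = H_{2n-i}^⊥ for all i. Then for every 0 ≤ i ≤ 2n-1, (dim(x ∩ G_{i+1}) - dim(x ∩ G_i)) + (dim(x ∩ H_{2n-i}) - dim(x ∩ H_{2n-i-1})) = 1. -/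
/-!
For a Lagrangian `x` and any subspace `A` we have `x ∩ A^⊥ = x^⊥ ∩ A^⊥ = (x + A)^⊥`, so
`dim (x ∩ A^⊥) + dim A = dim (x ∩ A) + dim x`. Since `G_i = H_{2n-i}^⊥`, applying this to
`A = H_{2n-i}` and `A = H_{2n-i-1}` expresses both `G`-terms through the `H`-terms, and the two
identities differ by `dim H_{2n-i} - dim H_{2n-i-1} = 1`. Both differences in the claim are
nonnegative, as `H_•` is increasing and `⊥` reverses inclusion, so the ℕ-subtractions are honest.
-/

open Module

namespace LinearMap.BilinForm

lemma orthogonal_sup {R M : Type*} [CommRing R] [AddCommGroup M] [Module R M]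
    (B : LinearMap.BilinForm R M) (W U : Submodule R M) :
    B.orthogonal (W ⊔ U) = B.orthogonal W ⊓ B.orthogonal U := by
  refine le_antisymm (le_inf (orthogonal_le le_sup_left) (orthogonal_le le_sup_right)) ?_
  rintro v ⟨hW, hU⟩ m hm
  obtain ⟨w, hw, u, hu, rfl⟩ := Submodule.mem_sup.1 hm
  change B (w + u) v = 0
  rw [map_add, LinearMap.add_apply, hW w hw, hU u hu, add_zero]

variable {K V : Type*} [Field K] [AddCommGroup V] [Module K V] [FiniteDimensional K V]
  {B : LinearMap.BilinForm K V}

lemma finrank_inf_orthogonal_add_finrank_eq (hB : B.Nondegenerate) {x : Submodule K V}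
    (hx : x = B.orthogonal x) (A : Submodule K V) :
    finrank K ↥(x ⊓ B.orthogonal A) + finrank K A = finrank K ↥(x ⊓ A) + finrank K x := by
  have hperp : x ⊓ B.orthogonal A = B.orthogonal (x ⊔ A) := by
    rw [orthogonal_sup, ← hx]
  have hsup := Submodule.finrank_sup_add_finrank_inf_eq x A
  have hsup_le : finrank K ↥(x ⊔ A) ≤ finrank K V := Submodule.finrank_le _
  have hx_le : finrank K x ≤ finrank K V := Submodule.finrank_le _
  have hx_dim : finrank K x = finrank K V - finrank K x := by
    conv_lhs => rw [hx]
    exact finrank_orthogonal hB x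
  rw [hperp, finrank_orthogonal hB]
  omega

end LinearMap.BilinForm

open LinearMap.BilinForm in
theorem lagrangian_flag_dimension_identity_general (n : ℕ) (V : Type*) [AddCommGroup V]
    [Module ℂ V] [FiniteDimensional ℂ V]
    (B : LinearMap.BilinForm ℂ V) (hB : B.Nondegenerate)
    (G H : ℕ → Submodule ℂ V)
    (hHdim : ∀ i ≤ 2 * n, Module.finrank ℂ (H i) = i)
    (hHmono : ∀ i j, i ≤ j → j ≤ 2 * n → H i ≤ H j)
    (hGH : ∀ i ≤ 2 * n, G i = B.orthogonal (H (2 * n - i)))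
    (x : Submodule ℂ V) (hx : x = B.orthogonal x) :
    ∀ i < 2 * n,
      (Module.finrank ℂ ↥(x ⊓ G (i + 1)) - Module.finrank ℂ ↥(x ⊓ G i)) +
        (Module.finrank ℂ ↥(x ⊓ H (2 * n - i)) -
          Module.finrank ℂ ↥(x ⊓ H (2 * n - i - 1))) = 1 := by
  intro i hi
  have hG : G i = B.orthogonal (H (2 * n - i)) := hGH i hi.le
  have hG_succ : G (i + 1) = B.orthogonal (H (2 * n - i - 1)) := by
    rw [hGH (i + 1) hi, Nat.sub_add_eq]
  have hH_le : H (2 * n - i - 1) ≤ H (2 * n - i) := hHmono _ _ (by omega) (by omega)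
  have hG_mono : finrank ℂ ↥(x ⊓ G i) ≤ finrank ℂ ↥(x ⊓ G (i + 1)) := by
    rw [hG, hG_succ]
    exact Submodule.finrank_mono (inf_le_inf_left x (orthogonal_le hH_le))
  have hH_mono : finrank ℂ ↥(x ⊓ H (2 * n - i - 1)) ≤ finrank ℂ ↥(x ⊓ H (2 * n - i)) :=
    Submodule.finrank_mono (inf_le_inf_left x hH_le)
  have key := finrank_inf_orthogonal_add_finrank_eq hB hx (H (2 * n - i))
  have key_succ := finrank_inf_orthogonal_add_finrank_eq hB hx (H (2 * n - i - 1))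
  rw [← hG, hHdim _ (by omega)] at key
  rw [← hG_succ, hHdim _ (by omega)] at key_succ
  omega

/-- Let `V` be a `2n`-dimensional complex symplectic vector space and `x` a
Lagrangian subspace (`x = x^⊥`). If `G_•` and `H_•` are complete flags with
`G_i = H_{2n-i}^⊥`, then for every `0 ≤ i ≤ 2n-1`,
`(dim(x ∩ G_{i+1}) - dim(x ∩ G_i)) + (dim(x ∩ H_{2n-i}) - dim(x ∩ H_{2n-i-1})) = 1`. -/
theorem lagrangian_flag_dimension_identity (n : ℕ) (V : Type*) [AddCommGroup V]
    [Module ℂ V] [FiniteDimensional ℂ V]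
    (B : LinearMap.BilinForm ℂ V) (hB : B.Nondegenerate) (halt : ∀ v, B v v = 0)
    (hdim : Module.finrank ℂ V = 2 * n)
    (G H : ℕ → Submodule ℂ V)
    (hGdim : ∀ i ≤ 2 * n, Module.finrank ℂ (G i) = i)
    (hHdim : ∀ i ≤ 2 * n, Module.finrank ℂ (H i) = i)
    (hGmono : ∀ i j, i ≤ j → j ≤ 2 * n → G i ≤ G j)
    (hHmono : ∀ i j, i ≤ j → j ≤ 2 * n → H i ≤ H j)
    (hGH : ∀ i ≤ 2 * n, G i = B.orthogonal (H (2 * n - i)))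
    (x : Submodule ℂ V) (hx : x = B.orthogonal x) :
    ∀ i < 2 * n,
      (Module.finrank ℂ ↥(x ⊓ G (i + 1)) - Module.finrank ℂ ↥(x ⊓ G i)) +
        (Module.finrank ℂ ↥(x ⊓ H (2 * n - i)) -
          Module.finrank ℂ ↥(x ⊓ H (2 * n - i - 1))) = 1 :=
  lagrangian_flag_dimension_identity_general n V B hB G H hHdim hHmono hGH x hx
end

section
/- The folding map fold: SYT(R) → SYT(R) on standard Young tableaux of rectangular shape, defined by successive jeu de taquin slides of the primed entries, is a bijection. -/
open Classical

/- Tableaux of the `n × (n+1)` rectangle are encoded as fillings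
`val : ℕ × ℕ → ℕ` of the cells `{(i,j) | i < n, j < n+1}` with the
`N = n(n+1) = 2M` labels `0, 1, ..., N-1`.  Labels encode the alphabet
`{1,...,M,1',...,M'}` via its *antidiagonal* (AST) order
`1 < 2 < ... < M < M' < ... < 2' < 1'`, so that `k` has label `k-1` and
`k'` has label `N-k`.  In the *diagonal* (DST) order
`1' < 1 < 2' < 2 < ... < M' < M`, the entry with label `m` has rank
`dstRank n m`.  The folding map is implemented by jeu de taquin slides:
at step `k` (`1 ≤ k ≤ M`) the box containing `k'` (label `N-k`) slides
through the subtableau formed by the entries `{k,...,M,M',...,(k+1)'}`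
(labels in `[k-1, N-k)`); along each slide the relative order of the
entries involved agrees with the label order. -/

/-- the cells of the `n × (n+1)` rectangle -/
def inRect (n : ℕ) (c : ℕ × ℕ) : Prop := c.1 < n ∧ c.2 < n + 1

/-- swap the values of a filling at two cells -/
def swapVals (val : ℕ × ℕ → ℕ) (c d : ℕ × ℕ) : ℕ × ℕ → ℕ :=
  fun e => if e = c then val d else if e = d then val c else val e

/-- One micro-step of a jeu de taquin slide: the box containing label `b`
exchanges with the larger qualifying neighbour (one whose label lies in
`[lo, b)`) above it or to its left, if any. -/
noncomputable def microSlide (n lo b : ℕ) (val : ℕ × ℕ → ℕ) : ℕ × ℕ → ℕ :=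
  if h : ∃ c, inRect n c ∧ val c = b then
    let c := Classical.choose h
    let u : ℕ × ℕ := (c.1 - 1, c.2)
    let l : ℕ × ℕ := (c.1, c.2 - 1)
    if (0 < c.1 ∧ lo ≤ val u ∧ val u < b) ∧ (0 < c.2 ∧ lo ≤ val l ∧ val l < b) then
      (if val l < val u then swapVals val c u else swapVals val c l)
    else if 0 < c.1 ∧ lo ≤ val u ∧ val u < b then swapVals val c u
    else if 0 < c.2 ∧ lo ≤ val l ∧ val l < b then swapVals val c l
    else val
  else val

/-- A full jeu de taquin slide of the box containing label `b` through the
subtableau of entries with labels in `[lo, b)`: iterate micro-steps (the number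
of cells of the rectangle is enough fuel). -/
noncomputable def slide (n lo b : ℕ) (val : ℕ × ℕ → ℕ) : ℕ × ℕ → ℕ :=
  (microSlide n lo b)^[n * (n + 1)] val

/-- the first `k` folding steps: at step `k` the box containing `k'`
(label `n(n+1) - k`) slides through the entries with labels in
`[k-1, n(n+1)-k)`, i.e. `{k,...,M,M',...,(k+1)'}`. -/
noncomputable def foldAux (n : ℕ) : ℕ → (ℕ × ℕ → ℕ) → (ℕ × ℕ → ℕ)
  | 0, val => val
  | k + 1, val => slide n k (n * (n + 1) - (k + 1)) (foldAux n k val)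

/-- the folding map on fillings of the `n × (n+1)` rectangle (`M = n(n+1)/2` steps) -/
noncomputable def foldMap (n : ℕ) (val : ℕ × ℕ → ℕ) : ℕ × ℕ → ℕ :=
  foldAux n (n * (n + 1) / 2) val

/-- `val` is a standard Young tableau of the `n × (n+1)` rectangle with respect to
the order on the alphabet given by `rank`: it is a bijection from the cells onto
the labels `0,...,n(n+1)-1`, strictly increasing (in rank) along rows and columns. -/
def IsRectSYT (n : ℕ) (rank : ℕ → ℕ) (val : ℕ × ℕ → ℕ) : Prop :=
  (∀ c, inRect n c → val c < n * (n + 1)) ∧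
  (∀ c d, inRect n c → inRect n d → val c = val d → c = d) ∧
  (∀ m, m < n * (n + 1) → ∃ c, inRect n c ∧ val c = m) ∧
  (∀ c d, inRect n c → inRect n d →
    ((c.1 = d.1 ∧ c.2 < d.2) ∨ (c.2 = d.2 ∧ c.1 < d.1)) →
    rank (val c) < rank (val d))

/-- the rank of label `m` in the antidiagonal order `1 < ... < M < M' < ... < 1'` -/
def astRank (n : ℕ) : ℕ → ℕ := id

/-- the rank of label `m` in the diagonal order `1' < 1 < 2' < 2 < ... < M' < M` -/
def dstRank (n : ℕ) (m : ℕ) : ℕ :=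
  if m < n * (n + 1) / 2 then 2 * m + 1 else 2 * (n * (n + 1) - m) - 2

namespace FoldProof

/-- rank of label `m` after `k` folding steps -/
def rk (n k m : ℕ) : ℕ :=
  if n*(n+1) - k ≤ m then 2*(n*(n+1) - m) - 2
  else if m < n*(n+1)/2 then 2*m+1
  else n*(n+1)/2 + m

def Mid (n k m : ℕ) : Prop := k ≤ m ∧ m < n*(n+1) - 1 - k

lemma NN_even (n : ℕ) : ∃ r, n*(n+1) = r + r := by
  obtain ⟨r, hr⟩ := Nat.even_mul_succ_self n
  exact ⟨r, hr⟩

section ranks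
variable {n k m m' : ℕ}

lemma rk_small_lt (hk : k + 1 ≤ n*(n+1)/2) (hm : m < n*(n+1))
    (hsm : m < k ∨ n*(n+1) - 1 - k < m) : rk n k m < 2*k := by
  obtain ⟨r, hr⟩ := NN_even n
  unfold rk; split_ifs <;> omega

lemma rk_mid_ge (hk : k + 1 ≤ n*(n+1)/2) (hmid : Mid n k m) : 2*k + 1 ≤ rk n k m := by
  obtain ⟨r, hr⟩ := NN_even n
  unfold Mid at hmid; unfold rk; split_ifs <;> omega

lemma rk_mid_mono (hk : k + 1 ≤ n*(n+1)/2) (h1 : Mid n k m) (h2 : Mid n k m')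
    (hmm : m < m') : rk n k m < rk n k m' := by
  obtain ⟨r, hr⟩ := NN_even n
  unfold Mid at h1 h2; unfold rk; split_ifs <;> omega

lemma rk_b_max (hk : k + 1 ≤ n*(n+1)/2) (hm : m < n*(n+1)) (hne : m ≠ n*(n+1) - 1 - k) :
    rk n k m < rk n k (n*(n+1) - 1 - k) := by
  obtain ⟨r, hr⟩ := NN_even n
  unfold rk; split_ifs <;> omega

lemma rk_agree (hk : k + 1 ≤ n*(n+1)/2) (hm : m < n*(n+1)) (hne : m ≠ n*(n+1) - 1 - k) :
    rk n (k+1) m = rk n k m := by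
  obtain ⟨r, hr⟩ := NN_even n
  unfold rk; split_ifs <;> omega

lemma rk_b_next (hk : k + 1 ≤ n*(n+1)/2) : rk n (k+1) (n*(n+1) - 1 - k) = 2*k := by
  obtain ⟨r, hr⟩ := NN_even n
  unfold rk; split_ifs <;> omega

/-- trichotomy for labels -/
lemma label_cases (hk : k + 1 ≤ n*(n+1)/2) (hm : m < n*(n+1)) :
    (m < k ∨ n*(n+1) - 1 - k < m) ∨ m = n*(n+1) - 1 - k ∨ Mid n k m := by
  obtain ⟨r, hr⟩ := NN_even n
  unfold Mid; omega

/-- a label with rank > 2k that is not b is Mid -/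
lemma mid_of_rk_gt (hk : k + 1 ≤ n*(n+1)/2) (hm : m < n*(n+1))
    (hne : m ≠ n*(n+1) - 1 - k) (hr : 2*k < rk n k m) : Mid n k m := by
  rcases label_cases hk hm with h | h | h
  · exact absurd (rk_small_lt hk hm h) (by omega)
  · exact absurd h hne
  · exact h

lemma mid_lt_of_rk_lt (hk : k + 1 ≤ n*(n+1)/2) (h1 : Mid n k m) (h2 : Mid n k m')
    (hr : rk n k m < rk n k m') : m < m' := by
  rcases lt_trichotomy m m' with h | h | h
  · exact h
  · subst h; omega
  · exact absurd (rk_mid_mono hk h2 h1 h) (by omega)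

lemma rk_zero_iff (h1 : m < n*(n+1)) (h2 : m' < n*(n+1)) :
    (rk n 0 m < rk n 0 m' ↔ m < m') := by
  obtain ⟨r, hr⟩ := NN_even n
  unfold rk; split_ifs <;> omega

lemma rk_M_eq_dst (n m : ℕ) : rk n (n*(n+1)/2) m = dstRank n m := by
  obtain ⟨r, hr⟩ := NN_even n
  unfold rk dstRank; split_ifs <;> omega

end ranks
end FoldProof

namespace FoldProof

/-- reverse micro-step -/
noncomputable def rev (n lo b : ℕ) (val : ℕ × ℕ → ℕ) : ℕ × ℕ → ℕ :=
  if h : ∃ c, inRect n c ∧ val c = b then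
    let c := Classical.choose h
    let d : ℕ × ℕ := (c.1 + 1, c.2)
    let r : ℕ × ℕ := (c.1, c.2 + 1)
    if (c.1 + 1 < n ∧ lo ≤ val d ∧ val d < b) ∧ (c.2 + 1 < n + 1 ∧ lo ≤ val r ∧ val r < b) then
      (if val d < val r then swapVals val c d else swapVals val c r)
    else if c.1 + 1 < n ∧ lo ≤ val d ∧ val d < b then swapVals val c d
    else if c.2 + 1 < n + 1 ∧ lo ≤ val r ∧ val r < b then swapVals val c r
    else val
  else val

section swaps
variable {val : ℕ × ℕ → ℕ} {c d e x : ℕ × ℕ} {n : ℕ}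

lemma swap_fst : swapVals val c d c = val d := by simp [swapVals]

lemma swap_snd (h : d ≠ c) : swapVals val c d d = val c := by simp [swapVals, h]

lemma swap_other (h1 : e ≠ c) (h2 : e ≠ d) : swapVals val c d e = val e := by
  simp [swapVals, h1, h2]

lemma swap_swap : swapVals (swapVals val c d) d c = val := by
  funext e
  by_cases h1 : e = d
  · subst h1; by_cases h2 : e = c <;> simp_all [swapVals]
  · by_cases h2 : e = c
    · subst h2; simp_all [swapVals]
    · simp [swapVals, h1, h2]

def tau (c d : ℕ × ℕ) (x : ℕ × ℕ) : ℕ × ℕ := if x = c then d else if x = d then c else x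

lemma swap_eq_tau : swapVals val c d e = val (tau c d e) := by
  unfold swapVals tau; split_ifs <;> rfl

lemma tau_mem (hc : inRect n c) (hd : inRect n d) (hx : inRect n x) :
    inRect n (tau c d x) := by
  unfold tau; split_ifs <;> assumption

lemma tau_tau : tau c d (tau c d x) = x := by
  unfold tau; split_ifs <;> simp_all

lemma swap_ub (hub : ∀ x, inRect n x → val x < n*(n+1)) (hc : inRect n c) (hd : inRect n d) :
    ∀ x, inRect n x → swapVals val c d x < n*(n+1) := by
  intro x hx
  rw [swap_eq_tau]
  exact hub _ (tau_mem hc hd hx)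

lemma swap_inj (hinj : ∀ x y, inRect n x → inRect n y → val x = val y → x = y)
    (hc : inRect n c) (hd : inRect n d) :
    ∀ x y, inRect n x → inRect n y → swapVals val c d x = swapVals val c d y → x = y := by
  intro x y hx hy hxy
  rw [swap_eq_tau, swap_eq_tau] at hxy
  have := hinj _ _ (tau_mem hc hd hx) (tau_mem hc hd hy) hxy
  have := congrArg (tau c d) this
  rwa [tau_tau, tau_tau] at this

lemma swap_surj (hsurj : ∀ m, m < n*(n+1) → ∃ x, inRect n x ∧ val x = m)
    (hc : inRect n c) (hd : inRect n d) :
    ∀ m, m < n*(n+1) → ∃ x, inRect n x ∧ swapVals val c d x = m := by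
  intro m hm
  obtain ⟨x, hx, hxm⟩ := hsurj m hm
  exact ⟨tau c d x, tau_mem hc hd hx, by rw [swap_eq_tau, tau_tau, hxm]⟩

end swaps

section spec
variable {n lo b : ℕ} {val : ℕ × ℕ → ℕ} {c : ℕ × ℕ}

lemma microSlide_spec (hc : inRect n c) (hv : val c = b)
    (hu : ∀ d, inRect n d → val d = b → d = c) :
    microSlide n lo b val =
      if (0 < c.1 ∧ lo ≤ val (c.1-1, c.2) ∧ val (c.1-1, c.2) < b) ∧
         (0 < c.2 ∧ lo ≤ val (c.1, c.2-1) ∧ val (c.1, c.2-1) < b) then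
        (if val (c.1, c.2-1) < val (c.1-1, c.2) then swapVals val c (c.1-1, c.2)
         else swapVals val c (c.1, c.2-1))
      else if 0 < c.1 ∧ lo ≤ val (c.1-1, c.2) ∧ val (c.1-1, c.2) < b then
        swapVals val c (c.1-1, c.2)
      else if 0 < c.2 ∧ lo ≤ val (c.1, c.2-1) ∧ val (c.1, c.2-1) < b then
        swapVals val c (c.1, c.2-1)
      else val := by
  have h : ∃ c, inRect n c ∧ val c = b := ⟨c, hc, hv⟩
  have hcc : Classical.choose h = c :=
    hu _ (Classical.choose_spec h).1 (Classical.choose_spec h).2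
  rw [microSlide, dif_pos h]
  simp only [hcc]

lemma rev_spec (hc : inRect n c) (hv : val c = b)
    (hu : ∀ d, inRect n d → val d = b → d = c) :
    rev n lo b val =
      if (c.1 + 1 < n ∧ lo ≤ val (c.1+1, c.2) ∧ val (c.1+1, c.2) < b) ∧
         (c.2 + 1 < n + 1 ∧ lo ≤ val (c.1, c.2+1) ∧ val (c.1, c.2+1) < b) then
        (if val (c.1+1, c.2) < val (c.1, c.2+1) then swapVals val c (c.1+1, c.2)
         else swapVals val c (c.1, c.2+1))
      else if c.1 + 1 < n ∧ lo ≤ val (c.1+1, c.2) ∧ val (c.1+1, c.2) < b then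
        swapVals val c (c.1+1, c.2)
      else if c.2 + 1 < n + 1 ∧ lo ≤ val (c.1, c.2+1) ∧ val (c.1, c.2+1) < b then
        swapVals val c (c.1, c.2+1)
      else val := by
  have h : ∃ c, inRect n c ∧ val c = b := ⟨c, hc, hv⟩
  have hcc : Classical.choose h = c :=
    hu _ (Classical.choose_spec h).1 (Classical.choose_spec h).2
  rw [rev, dif_pos h]
  simp only [hcc]

end spec
end FoldProof

namespace FoldProof

structure Inv (n k : ℕ) (val : ℕ × ℕ → ℕ) (c : ℕ × ℕ) : Prop where
  mem : inRect n c
  hole : val c = n*(n+1) - 1 - k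
  ub : ∀ d, inRect n d → val d < n*(n+1)
  inj : ∀ d e, inRect n d → inRect n e → val d = val e → d = e
  surj : ∀ m, m < n*(n+1) → ∃ d, inRect n d ∧ val d = m
  adjR : ∀ d : ℕ × ℕ, inRect n d → inRect n (d.1, d.2+1) → d ≠ c → (d.1, d.2+1) ≠ c →
    rk n k (val d) < rk n k (val (d.1, d.2+1))
  adjD : ∀ d : ℕ × ℕ, inRect n d → inRect n (d.1+1, d.2) → d ≠ c → (d.1+1, d.2) ≠ c →
    rk n k (val d) < rk n k (val (d.1+1, d.2))
  skipV : 0 < c.1 → inRect n (c.1+1, c.2) →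
    rk n k (val (c.1-1, c.2)) < rk n k (val (c.1+1, c.2))
  skipH : 0 < c.2 → inRect n (c.1, c.2+1) →
    rk n k (val (c.1, c.2-1)) < rk n k (val (c.1, c.2+1))
  midD : inRect n (c.1+1, c.2) → Mid n k (val (c.1+1, c.2))
  midR : inRect n (c.1, c.2+1) → Mid n k (val (c.1, c.2+1))

variable {n k : ℕ}

lemma pair_ne_fst {a c : ℕ} (b d : ℕ) (h : a ≠ c) : (a, b) ≠ (c, d) :=
  fun he => h (congrArg Prod.fst he)

lemma pair_ne_snd (a c : ℕ) {b d : ℕ} (h : b ≠ d) : (a, b) ≠ (c, d) :=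
  fun he => h (congrArg Prod.snd he)

lemma pair_eq_of {a b c d : ℕ} (h1 : a = c) (h2 : b = d) : (a, b) = (c, d) := by
  subst h1; subst h2; rfl

lemma Inv.ne_b {val : ℕ×ℕ→ℕ} {c : ℕ×ℕ} (h : Inv n k val c) {d : ℕ×ℕ}
    (hd : inRect n d) (hne : d ≠ c) : val d ≠ n*(n+1)-1-k := fun hb =>
  hne (h.inj _ _ hd h.mem (hb.trans h.hole.symm))

/-- a non-hole entry that fails the qualification test has small rank -/
lemma Inv.small_rk {val : ℕ×ℕ→ℕ} {c : ℕ×ℕ} (hk : k + 1 ≤ n*(n+1)/2)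
    (h : Inv n k val c) {d : ℕ×ℕ} (hd : inRect n d) (hne : d ≠ c)
    (hfail : ¬(k ≤ val d ∧ val d < n*(n+1)-1-k)) : rk n k (val d) < 2*k := by
  have hb := h.ne_b hd hne
  have hub := h.ub d hd
  apply rk_small_lt hk hub
  rcases label_cases hk hub (m := val d) with hc | hc | hc
  · exact hc
  · exact absurd hc hb
  · exact absurd hc hfail

lemma up_case (hk : k + 1 ≤ n*(n+1)/2) {val : ℕ×ℕ→ℕ} {ci cj : ℕ}
    (h : Inv n k val (ci, cj)) (h1 : 0 < ci)
    (h2 : k ≤ val (ci-1, cj)) (h3 : val (ci-1, cj) < n*(n+1)-1-k)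
    (hbeat : 0 < cj → k ≤ val (ci, cj-1) → val (ci, cj-1) < n*(n+1)-1-k →
      val (ci, cj-1) < val (ci-1, cj)) :
    Inv n k (swapVals val (ci, cj) (ci-1, cj)) (ci-1, cj) ∧
      rev n k (n*(n+1)-1-k) (swapVals val (ci, cj) (ci-1, cj)) = val := by
  obtain ⟨hci, hcj⟩ := h.mem
  have hne_uc : ((ci-1 : ℕ), cj) ≠ (ci, cj) := pair_ne_fst _ _ (by omega)
  have humem : inRect n (ci-1, cj) := ⟨by omega, hcj⟩
  set v' := swapVals val (ci, cj) (ci-1, cj) with hv'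
  have hvu : v' (ci-1, cj) = n*(n+1)-1-k := by rw [hv', swap_snd hne_uc, h.hole]
  have hvc : v' (ci, cj) = val (ci-1, cj) := by rw [hv', swap_fst]
  have hvo : ∀ e : ℕ×ℕ, e ≠ (ci,cj) → e ≠ (ci-1,cj) → v' e = val e :=
    fun e he1 he2 => swap_other he1 he2
  have hmidu : Mid n k (val (ci-1,cj)) := ⟨h2, h3⟩
  have hup_eq : ((ci:ℕ)-1+1, cj) = (ci, cj) := pair_eq_of (by omega) rfl
  have hru : ∀ (_ : inRect n (ci-1, cj+1)),
      rk n k (val (ci-1,cj)) < rk n k (val (ci-1,cj+1)) := by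
    intro hrr
    exact h.adjR (ci-1, cj) humem hrr (pair_ne_fst _ _ (by omega))
      (pair_ne_snd _ _ (by omega))
  have hrmid : ∀ (_ : inRect n (ci-1, cj+1)), Mid n k (val (ci-1,cj+1)) := by
    intro hrr
    refine mid_of_rk_gt hk (h.ub _ hrr) (h.ne_b hrr (pair_ne_fst _ _ (by omega))) ?_
    have := rk_mid_ge hk hmidu
    have := hru hrr
    omega
  constructor
  · constructor
    case mem => exact humem
    case hole => exact hvu
    case ub => exact swap_ub h.ub h.mem humem
    case inj => exact swap_inj h.inj h.mem humem
    case surj => exact swap_surj h.surj h.mem humem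
    case adjR =>
      rintro ⟨d1, d2⟩ hd hd2 hne1 hne2
      by_cases hdc : (d1, d2) = ((ci:ℕ), cj)
      · rw [hdc]
        show rk n k (v' (ci, cj)) < rk n k (v' (ci, cj+1))
        obtain ⟨he1, he2⟩ := Prod.mk.injEq .. ▸ hdc
        have hrcmem : inRect n ((ci:ℕ), cj+1) := by
          rw [← he1, ← he2]; exact hd2
        have hrrmem : inRect n ((ci:ℕ)-1, cj+1) := ⟨by omega, hrcmem.2⟩
        rw [hvc, hvo (ci, cj+1) (pair_ne_snd _ _ (by omega)) (pair_ne_fst _ _ (by omega))]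
        refine lt_trans (hru hrrmem) ?_
        have hstep2 := h.adjD ((ci:ℕ)-1, cj+1) hrrmem
          (by rw [show (((ci:ℕ)-1, cj+1).1 + 1, ((ci:ℕ)-1, cj+1).2) = ((ci:ℕ), cj+1)
              from pair_eq_of (by omega) rfl]; exact hrcmem)
          (pair_ne_snd _ _ (by omega)) (pair_ne_snd _ _ (by omega))
        rw [show (((ci:ℕ)-1, cj+1).1 + 1, ((ci:ℕ)-1, cj+1).2) = ((ci:ℕ), cj+1)
            from pair_eq_of (by omega) rfl] at hstep2
        exact hstep2
      · by_cases hdc2 : ((d1 : ℕ), d2 + 1) = ((ci:ℕ), cj)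
        · obtain ⟨he1, he2⟩ := Prod.mk.injEq .. ▸ hdc2
          have hcj0 : 0 < cj := by omega
          have hdd : ((d1:ℕ), d2) = ((ci:ℕ), cj-1) := pair_eq_of he1 (by omega)
          show rk n k (v' (d1, d2)) < rk n k (v' (d1, d2+1))
          rw [show ((d1:ℕ), d2+1) = ((ci:ℕ), cj) from hdc2, hdd, hvc,
            hvo (ci, cj-1) (pair_ne_snd _ _ (by omega)) (pair_ne_fst _ _ (by omega))]
          rw [hdd] at hd hne1
          by_cases hq : k ≤ val ((ci:ℕ), cj-1) ∧ val ((ci:ℕ), cj-1) < n*(n+1)-1-k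
          · exact rk_mid_mono hk ⟨hq.1, hq.2⟩ hmidu (hbeat hcj0 hq.1 hq.2)
          · have hsm := h.small_rk hk hd (pair_ne_snd _ _ (by omega)) hq
            have := rk_mid_ge hk hmidu
            omega
        · rw [hvo (d1, d2) hdc hne1, hvo (d1, d2+1) hdc2 hne2]
          exact h.adjR (d1, d2) hd hd2 hdc hdc2
    case adjD =>
      rintro ⟨d1, d2⟩ hd hd2 hne1 hne2
      by_cases hdc : (d1, d2) = ((ci:ℕ), cj)
      · rw [hdc]
        show rk n k (v' (ci, cj)) < rk n k (v' (ci+1, cj))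
        obtain ⟨he1, he2⟩ := Prod.mk.injEq .. ▸ hdc
        have hdcmem : inRect n ((ci:ℕ)+1, cj) := by
          rw [← he1, ← he2]; exact hd2
        rw [hvc, hvo (ci+1, cj) (pair_ne_fst _ _ (by omega)) (pair_ne_fst _ _ (by omega))]
        exact h.skipV h1 hdcmem
      · by_cases hdc2 : ((d1 : ℕ)+1, d2) = ((ci:ℕ), cj)
        · exfalso
          obtain ⟨he1, he2⟩ := Prod.mk.injEq .. ▸ hdc2
          exact hne1 (pair_eq_of (by omega) (by omega))
        · rw [hvo (d1, d2) hdc hne1, hvo (d1+1, d2) hdc2 hne2]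
          exact h.adjD (d1, d2) hd hd2 hdc hdc2
    case skipV =>
      intro hpos hmem2
      have hpos' : 0 < ci - 1 := hpos
      have hmem2' : inRect n ((ci:ℕ), cj) := by
        rw [← hup_eq]; exact hmem2
      show rk n k (v' (ci-1-1, cj)) < rk n k (v' (ci-1+1, cj))
      rw [hup_eq, hvc,
        hvo (ci-1-1, cj) (pair_ne_fst _ _ (by omega)) (pair_ne_fst _ _ (by omega))]
      have huumem : inRect n ((ci:ℕ)-1-1, cj) := ⟨by omega, hcj⟩
      have := h.adjD ((ci:ℕ)-1-1, cj) huumem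
        (by rw [show (((ci:ℕ)-1-1, cj).1 + 1, ((ci:ℕ)-1-1, cj).2) = ((ci:ℕ)-1, cj)
            from pair_eq_of (by omega) rfl]; exact humem)
        (pair_ne_fst _ _ (by omega)) (pair_ne_fst _ _ (by omega))
      rw [show (((ci:ℕ)-1-1, cj).1 + 1, ((ci:ℕ)-1-1, cj).2) = ((ci:ℕ)-1, cj)
          from pair_eq_of (by omega) rfl] at this
      exact this
    case skipH =>
      intro hpos hmem2
      have hpos' : 0 < cj := hpos
      have hrmem : inRect n ((ci:ℕ)-1, cj+1) := hmem2
      show rk n k (v' (ci-1, cj-1)) < rk n k (v' (ci-1, cj+1))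
      rw [hvo (ci-1, cj-1) (pair_ne_fst _ _ (by omega)) (pair_ne_snd _ _ (by omega)),
        hvo (ci-1, cj+1) (pair_ne_fst _ _ (by omega)) (pair_ne_snd _ _ (by omega))]
      have hlumem : inRect n ((ci:ℕ)-1, cj-1) := ⟨by omega, by omega⟩
      have hstep1 := h.adjR ((ci:ℕ)-1, cj-1) hlumem
        (by rw [show (((ci:ℕ)-1, cj-1).1, ((ci:ℕ)-1, cj-1).2 + 1) = ((ci:ℕ)-1, cj)
            from pair_eq_of rfl (by omega)]; exact humem)
        (pair_ne_fst _ _ (by omega)) (pair_ne_fst _ _ (by omega))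
      rw [show (((ci:ℕ)-1, cj-1).1, ((ci:ℕ)-1, cj-1).2 + 1) = ((ci:ℕ)-1, cj)
          from pair_eq_of rfl (by omega)] at hstep1
      refine lt_trans hstep1 ?_
      exact h.adjR ((ci:ℕ)-1, cj) humem hrmem (pair_ne_fst _ _ (by omega))
        (pair_ne_fst _ _ (by omega))
    case midD =>
      intro hmem2
      show Mid n k (v' (ci-1+1, cj))
      rw [hup_eq, hvc]
      exact hmidu
    case midR =>
      intro hmem2
      have hrmem : inRect n ((ci:ℕ)-1, cj+1) := hmem2
      show Mid n k (v' (ci-1, cj+1))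
      rw [hvo (ci-1, cj+1) (pair_ne_fst _ _ (by omega)) (pair_ne_snd _ _ (by omega))]
      exact hrmid hrmem
  · have huniq : ∀ d, inRect n d → v' d = n*(n+1)-1-k → d = ((ci:ℕ)-1, cj) := by
      intro d hd hdb
      exact swap_inj h.inj h.mem humem d _ hd humem (by rw [← hv']; rw [hdb, hvu])
    rw [rev_spec humem hvu huniq]
    have hQD : (ci:ℕ)-1+1 < n ∧ k ≤ v' ((ci:ℕ)-1+1, cj) ∧
        v' ((ci:ℕ)-1+1, cj) < n*(n+1)-1-k := by
      rw [hup_eq, hvc]; exact ⟨by omega, h2, h3⟩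
    have hundo : swapVals v' ((ci:ℕ)-1, cj) ((ci:ℕ)-1+1, cj) = val := by
      rw [hup_eq, hv']; exact swap_swap
    by_cases hQR : (cj:ℕ)+1 < n+1 ∧ k ≤ v' ((ci:ℕ)-1, cj+1) ∧
        v' ((ci:ℕ)-1, cj+1) < n*(n+1)-1-k
    · rw [if_pos ⟨hQD, hQR⟩]
      have hrmem : inRect n ((ci:ℕ)-1, cj+1) := ⟨by omega, hQR.1⟩
      have hvr : v' ((ci:ℕ)-1, cj+1) = val ((ci:ℕ)-1, cj+1) :=
        hvo _ (pair_ne_fst _ _ (by omega)) (pair_ne_snd _ _ (by omega))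
      have hlt : v' ((ci:ℕ)-1+1, cj) < v' ((ci:ℕ)-1, cj+1) := by
        rw [hup_eq, hvc, hvr]
        exact mid_lt_of_rk_lt hk hmidu (hrmid hrmem) (hru hrmem)
      rw [if_pos hlt]
      exact hundo
    · rw [if_neg (by intro hcon; exact hQR hcon.2), if_pos hQD]
      exact hundo

end FoldProof

namespace FoldProof

variable {n k : ℕ}

lemma left_case (hk : k + 1 ≤ n*(n+1)/2) {val : ℕ×ℕ→ℕ} {ci cj : ℕ}
    (h : Inv n k val (ci, cj)) (h1 : 0 < cj)
    (h2 : k ≤ val (ci, cj-1)) (h3 : val (ci, cj-1) < n*(n+1)-1-k)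
    (hbeat : 0 < ci → k ≤ val (ci-1, cj) → val (ci-1, cj) < n*(n+1)-1-k →
      val (ci-1, cj) < val (ci, cj-1)) :
    Inv n k (swapVals val (ci, cj) (ci, cj-1)) (ci, cj-1) ∧
      rev n k (n*(n+1)-1-k) (swapVals val (ci, cj) (ci, cj-1)) = val := by
  obtain ⟨hci, hcj⟩ := h.mem
  have hci' : ci < n := hci
  have hcj' : cj < n + 1 := hcj
  have hne_lc : ((ci : ℕ), cj-1) ≠ (ci, cj) := pair_ne_snd _ _ (by omega)
  have hlmem : inRect n ((ci:ℕ), cj-1) := ⟨hci', by omega⟩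
  set v' := swapVals val (ci, cj) (ci, cj-1) with hv'
  have hvu : v' (ci, cj-1) = n*(n+1)-1-k := by rw [hv', swap_snd hne_lc, h.hole]
  have hvc : v' (ci, cj) = val (ci, cj-1) := by rw [hv', swap_fst]
  have hvo : ∀ e : ℕ×ℕ, e ≠ (ci,cj) → e ≠ (ci,cj-1) → v' e = val e :=
    fun e he1 he2 => swap_other he1 he2
  have hmidl : Mid n k (val (ci,cj-1)) := ⟨h2, h3⟩
  have hright_eq : ((ci:ℕ), cj-1+1) = (ci, cj) := pair_eq_of rfl (by omega)
  have hdl : ∀ (_ : inRect n ((ci:ℕ)+1, cj-1)),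
      rk n k (val (ci,cj-1)) < rk n k (val (ci+1,cj-1)) := by
    intro hdd
    exact h.adjD (ci, cj-1) hlmem hdd (pair_ne_snd _ _ (by omega))
      (pair_ne_fst _ _ (by omega))
  have hdlmid : ∀ (_ : inRect n ((ci:ℕ)+1, cj-1)), Mid n k (val (ci+1,cj-1)) := by
    intro hdd
    refine mid_of_rk_gt hk (h.ub _ hdd) (h.ne_b hdd (pair_ne_fst _ _ (by omega))) ?_
    have := rk_mid_ge hk hmidl
    have := hdl hdd
    omega
  constructor
  · constructor
    case mem => exact hlmem
    case hole => exact hvu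
    case ub => exact swap_ub h.ub h.mem hlmem
    case inj => exact swap_inj h.inj h.mem hlmem
    case surj => exact swap_surj h.surj h.mem hlmem
    case adjR =>
      rintro ⟨d1, d2⟩ hd hd2 hne1 hne2
      by_cases hdc : (d1, d2) = ((ci:ℕ), cj)
      · rw [hdc]
        show rk n k (v' (ci, cj)) < rk n k (v' (ci, cj+1))
        obtain ⟨he1, he2⟩ := Prod.mk.injEq .. ▸ hdc
        have hrcmem : inRect n ((ci:ℕ), cj+1) := by
          rw [← he1, ← he2]; exact hd2
        rw [hvc, hvo (ci, cj+1) (pair_ne_snd _ _ (by omega)) (pair_ne_snd _ _ (by omega))]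
        exact h.skipH h1 hrcmem
      · by_cases hdc2 : ((d1 : ℕ), d2 + 1) = ((ci:ℕ), cj)
        · exfalso
          obtain ⟨he1, he2⟩ := Prod.mk.injEq .. ▸ hdc2
          exact hne1 (pair_eq_of (by omega) (by omega))
        · rw [hvo (d1, d2) hdc hne1, hvo (d1, d2+1) hdc2 hne2]
          exact h.adjR (d1, d2) hd hd2 hdc hdc2
    case adjD =>
      rintro ⟨d1, d2⟩ hd hd2 hne1 hne2
      by_cases hdc : (d1, d2) = ((ci:ℕ), cj)
      · rw [hdc]
        show rk n k (v' (ci, cj)) < rk n k (v' (ci+1, cj))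
        obtain ⟨he1, he2⟩ := Prod.mk.injEq .. ▸ hdc
        have hdcmem : inRect n ((ci:ℕ)+1, cj) := by
          rw [← he1, ← he2]; exact hd2
        have hdlmem : inRect n ((ci:ℕ)+1, cj-1) := ⟨hdcmem.1, by omega⟩
        rw [hvc, hvo (ci+1, cj) (pair_ne_fst _ _ (by omega)) (pair_ne_fst _ _ (by omega))]
        refine lt_trans (hdl hdlmem) ?_
        have hstep2 := h.adjR ((ci:ℕ)+1, cj-1) hdlmem
          (by rw [show (((ci:ℕ)+1, cj-1).1, ((ci:ℕ)+1, cj-1).2 + 1) = ((ci:ℕ)+1, cj)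
              from pair_eq_of rfl (by omega)]; exact hdcmem)
          (pair_ne_fst _ _ (by omega)) (pair_ne_fst _ _ (by omega))
        rw [show (((ci:ℕ)+1, cj-1).1, ((ci:ℕ)+1, cj-1).2 + 1) = ((ci:ℕ)+1, cj)
            from pair_eq_of rfl (by omega)] at hstep2
        exact hstep2
      · by_cases hdc2 : ((d1 : ℕ)+1, d2) = ((ci:ℕ), cj)
        · obtain ⟨he1, he2⟩ := Prod.mk.injEq .. ▸ hdc2
          have hci0 : 0 < ci := by omega
          have hdd : ((d1:ℕ), d2) = ((ci:ℕ)-1, cj) := pair_eq_of (by omega) he2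
          show rk n k (v' (d1, d2)) < rk n k (v' (d1+1, d2))
          rw [show ((d1:ℕ)+1, d2) = ((ci:ℕ), cj) from hdc2, hdd, hvc,
            hvo (ci-1, cj) (pair_ne_fst _ _ (by omega)) (pair_ne_snd _ _ (by omega))]
          rw [hdd] at hd hne1
          by_cases hq : k ≤ val ((ci:ℕ)-1, cj) ∧ val ((ci:ℕ)-1, cj) < n*(n+1)-1-k
          · exact rk_mid_mono hk ⟨hq.1, hq.2⟩ hmidl (hbeat hci0 hq.1 hq.2)
          · have hsm := h.small_rk hk hd (pair_ne_fst _ _ (by omega)) hq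
            have := rk_mid_ge hk hmidl
            omega
        · rw [hvo (d1, d2) hdc hne1, hvo (d1+1, d2) hdc2 hne2]
          exact h.adjD (d1, d2) hd hd2 hdc hdc2
    case skipV =>
      intro hpos hmem2
      have hpos' : 0 < ci := hpos
      have hdlmem : inRect n ((ci:ℕ)+1, cj-1) := hmem2
      show rk n k (v' (ci-1, cj-1)) < rk n k (v' (ci+1, cj-1))
      rw [hvo (ci-1, cj-1) (pair_ne_snd _ _ (by omega)) (pair_ne_fst _ _ (by omega)),
        hvo (ci+1, cj-1) (pair_ne_snd _ _ (by omega)) (pair_ne_fst _ _ (by omega))]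
      have hulmem : inRect n ((ci:ℕ)-1, cj-1) := ⟨by omega, by omega⟩
      have hstep1 := h.adjD ((ci:ℕ)-1, cj-1) hulmem
        (by rw [show (((ci:ℕ)-1, cj-1).1 + 1, ((ci:ℕ)-1, cj-1).2) = ((ci:ℕ), cj-1)
            from pair_eq_of (by omega) rfl]; exact hlmem)
        (pair_ne_snd _ _ (by omega)) (pair_ne_snd _ _ (by omega))
      rw [show (((ci:ℕ)-1, cj-1).1 + 1, ((ci:ℕ)-1, cj-1).2) = ((ci:ℕ), cj-1)
          from pair_eq_of (by omega) rfl] at hstep1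
      refine lt_trans hstep1 ?_
      have hstep2 := h.adjD ((ci:ℕ), cj-1) hlmem
        (by rw [show (((ci:ℕ), cj-1).1 + 1, ((ci:ℕ), cj-1).2) = ((ci:ℕ)+1, cj-1)
            from pair_eq_of rfl rfl]; exact hdlmem)
        (pair_ne_snd _ _ (by omega)) (pair_ne_fst _ _ (by omega))
      exact hstep2
    case skipH =>
      intro hpos hmem2
      have hpos' : 0 < cj - 1 := hpos
      show rk n k (v' (ci, cj-1-1)) < rk n k (v' (ci, cj-1+1))
      rw [hright_eq, hvc,
        hvo (ci, cj-1-1) (pair_ne_snd _ _ (by omega)) (pair_ne_snd _ _ (by omega))]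
      have hllmem : inRect n ((ci:ℕ), cj-1-1) := ⟨hci', by omega⟩
      have := h.adjR ((ci:ℕ), cj-1-1) hllmem
        (by rw [show (((ci:ℕ), cj-1-1).1, ((ci:ℕ), cj-1-1).2 + 1) = ((ci:ℕ), cj-1)
            from pair_eq_of rfl (by omega)]; exact hlmem)
        (pair_ne_snd _ _ (by omega)) (pair_ne_snd _ _ (by omega))
      rw [show (((ci:ℕ), cj-1-1).1, ((ci:ℕ), cj-1-1).2 + 1) = ((ci:ℕ), cj-1)
          from pair_eq_of rfl (by omega)] at this
      exact this
    case midD =>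
      intro hmem2
      have hdlmem : inRect n ((ci:ℕ)+1, cj-1) := hmem2
      show Mid n k (v' (ci+1, cj-1))
      rw [hvo (ci+1, cj-1) (pair_ne_snd _ _ (by omega)) (pair_ne_fst _ _ (by omega))]
      exact hdlmid hdlmem
    case midR =>
      intro hmem2
      show Mid n k (v' (ci, cj-1+1))
      rw [hright_eq, hvc]
      exact hmidl
  · have huniq : ∀ d, inRect n d → v' d = n*(n+1)-1-k → d = ((ci:ℕ), cj-1) := by
      intro d hd hdb
      exact swap_inj h.inj h.mem hlmem d _ hd hlmem (by rw [← hv']; rw [hdb, hvu])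
    rw [rev_spec hlmem hvu huniq]
    have hQR : (cj:ℕ)-1+1 < n+1 ∧ k ≤ v' ((ci:ℕ), cj-1+1) ∧
        v' ((ci:ℕ), cj-1+1) < n*(n+1)-1-k := by
      rw [hright_eq, hvc]; exact ⟨by omega, h2, h3⟩
    have hundo : swapVals v' ((ci:ℕ), cj-1) ((ci:ℕ), cj-1+1) = val := by
      rw [hright_eq, hv']; exact swap_swap
    by_cases hQD : (ci:ℕ)+1 < n ∧ k ≤ v' ((ci:ℕ)+1, cj-1) ∧
        v' ((ci:ℕ)+1, cj-1) < n*(n+1)-1-k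
    · rw [if_pos ⟨hQD, hQR⟩]
      have hdlmem : inRect n ((ci:ℕ)+1, cj-1) := ⟨hQD.1, by omega⟩
      have hvd : v' ((ci:ℕ)+1, cj-1) = val ((ci:ℕ)+1, cj-1) :=
        hvo _ (pair_ne_snd _ _ (by omega)) (pair_ne_fst _ _ (by omega))
      have hlt : ¬(v' ((ci:ℕ)+1, cj-1) < v' ((ci:ℕ), cj-1+1)) := by
        rw [hright_eq, hvc, hvd]
        have := mid_lt_of_rk_lt hk hmidl (hdlmid hdlmem) (hdl hdlmem)
        omega
      rw [if_neg hlt]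
      exact hundo
    · rw [if_neg (by intro hcon; exact hQD hcon.1), if_neg hQD, if_pos hQR]
      exact hundo

end FoldProof

namespace FoldProof

variable {n k : ℕ}

/-- adjacent increase implies pairwise increase along rows and columns -/
lemma pairwise_of_adj {ρ : ℕ → ℕ} {val : ℕ×ℕ→ℕ}
    (hR : ∀ d : ℕ×ℕ, inRect n d → inRect n (d.1, d.2+1) → ρ (val d) < ρ (val (d.1, d.2+1)))
    (hD : ∀ d : ℕ×ℕ, inRect n d → inRect n (d.1+1, d.2) → ρ (val d) < ρ (val (d.1+1, d.2))) :
    ∀ c d : ℕ×ℕ, inRect n c → inRect n d →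
      ((c.1 = d.1 ∧ c.2 < d.2) ∨ (c.2 = d.2 ∧ c.1 < d.1)) → ρ (val c) < ρ (val d) := by
  have row : ∀ (i j t : ℕ), i < n → j + t + 1 < n + 1 → ρ (val (i, j)) < ρ (val (i, j+t+1)) := by
    intro i j t hi
    induction t with
    | zero => intro hj; exact hR (i, j) ⟨hi, by omega⟩ ⟨hi, hj⟩
    | succ t ih =>
        intro hj
        exact lt_trans (ih (by omega)) (hR (i, j+t+1) ⟨hi, by omega⟩ ⟨hi, hj⟩)
  have col : ∀ (i j t : ℕ), j < n + 1 → i + t + 1 < n → ρ (val (i, j)) < ρ (val (i+t+1, j)) := by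
    intro i j t hj
    induction t with
    | zero => intro hi; exact hD (i, j) ⟨by omega, hj⟩ ⟨hi, hj⟩
    | succ t ih =>
        intro hi
        exact lt_trans (ih (by omega)) (hD (i+t+1, j) ⟨by omega, hj⟩ ⟨hi, hj⟩)
  rintro ⟨c1, c2⟩ ⟨d1, d2⟩ ⟨hc1, hc2⟩ ⟨hd1, hd2⟩ (⟨he, hlt⟩ | ⟨he, hlt⟩)
  · simp only at he hlt hc1 hc2 hd1 hd2
    subst he
    have h2 : d2 = c2 + (d2 - c2 - 1) + 1 := by omega
    have := row c1 c2 (d2 - c2 - 1) hc1 (by omega)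
    rw [← h2] at this
    exact this
  · simp only at he hlt hc1 hc2 hd1 hd2
    subst he
    have h2 : d1 = c1 + (d1 - c1 - 1) + 1 := by omega
    have := col c1 c2 (d1 - c1 - 1) hc2 (by omega)
    rw [← h2] at this
    exact this

lemma terminal_syt (hk : k + 1 ≤ n*(n+1)/2) {val : ℕ×ℕ→ℕ} {c : ℕ×ℕ} (h : Inv n k val c)
    (hU : ¬(0 < c.1 ∧ k ≤ val (c.1-1,c.2) ∧ val (c.1-1,c.2) < n*(n+1)-1-k))
    (hL : ¬(0 < c.2 ∧ k ≤ val (c.1,c.2-1) ∧ val (c.1,c.2-1) < n*(n+1)-1-k)) :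
    IsRectSYT n (rk n (k+1)) val := by
  obtain ⟨ci, cj⟩ := c
  have hUc : ¬(0 < ci ∧ k ≤ val (ci-1,cj) ∧ val (ci-1,cj) < n*(n+1)-1-k) := hU
  have hLc : ¬(0 < cj ∧ k ≤ val (ci,cj-1) ∧ val (ci,cj-1) < n*(n+1)-1-k) := hL
  have hagree : ∀ d : ℕ×ℕ, inRect n d → d ≠ (ci,cj) → rk n (k+1) (val d) = rk n k (val d) :=
    fun d hd hne => rk_agree hk (h.ub d hd) (h.ne_b hd hne)
  have hc_rk : rk n (k+1) (val (ci,cj)) = 2*k := by rw [h.hole]; exact rk_b_next hk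
  have hR : ∀ d : ℕ×ℕ, inRect n d → inRect n (d.1, d.2+1) →
      rk n (k+1) (val d) < rk n (k+1) (val (d.1, d.2+1)) := by
    rintro ⟨d1, d2⟩ hd hd2
    by_cases hdc : (d1, d2) = ((ci:ℕ), cj)
    · obtain ⟨he1, he2⟩ := Prod.mk.injEq .. ▸ hdc
      show rk n (k+1) (val (d1, d2)) < rk n (k+1) (val (d1, d2+1))
      rw [hdc, show ((d1:ℕ), d2+1) = ((ci:ℕ), cj+1) from pair_eq_of he1 (by omega), hc_rk]
      have hrcmem : inRect n ((ci:ℕ), cj+1) := by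
        rw [show ((ci:ℕ), cj+1) = (d1, d2+1) from pair_eq_of he1.symm (by omega)]; exact hd2
      have hmid : Mid n k (val ((ci:ℕ), cj+1)) := h.midR hrcmem
      rw [hagree _ hrcmem (pair_ne_snd _ _ (by omega))]
      have := rk_mid_ge hk hmid
      omega
    · by_cases hdc2 : ((d1:ℕ), d2+1) = ((ci:ℕ), cj)
      · obtain ⟨he1, he2⟩ := Prod.mk.injEq .. ▸ hdc2
        show rk n (k+1) (val (d1, d2)) < rk n (k+1) (val (d1, d2+1))
        rw [hdc2, hc_rk, hagree _ hd hdc]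
        have hfail : ¬(k ≤ val (d1, d2) ∧ val (d1, d2) < n*(n+1)-1-k) := by
          intro hq
          apply hLc
          refine ⟨by omega, ?_, ?_⟩ <;>
            rw [show ((ci:ℕ), cj-1) = ((d1:ℕ), d2) from pair_eq_of he1.symm (by omega)] <;>
            [exact hq.1; exact hq.2]
        have := h.small_rk hk hd hdc hfail
        omega
      · rw [hagree _ hd hdc, hagree _ hd2 hdc2]
        exact h.adjR (d1, d2) hd hd2 hdc hdc2
  have hD : ∀ d : ℕ×ℕ, inRect n d → inRect n (d.1+1, d.2) →
      rk n (k+1) (val d) < rk n (k+1) (val (d.1+1, d.2)) := by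
    rintro ⟨d1, d2⟩ hd hd2
    by_cases hdc : (d1, d2) = ((ci:ℕ), cj)
    · obtain ⟨he1, he2⟩ := Prod.mk.injEq .. ▸ hdc
      show rk n (k+1) (val (d1, d2)) < rk n (k+1) (val (d1+1, d2))
      rw [hdc, show ((d1:ℕ)+1, d2) = ((ci:ℕ)+1, cj) from pair_eq_of (by omega) he2, hc_rk]
      have hdcmem : inRect n ((ci:ℕ)+1, cj) := by
        rw [show ((ci:ℕ)+1, cj) = (d1+1, d2) from pair_eq_of (by omega) he2.symm]; exact hd2
      have hmid : Mid n k (val ((ci:ℕ)+1, cj)) := h.midD hdcmem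
      rw [hagree _ hdcmem (pair_ne_fst _ _ (by omega))]
      have := rk_mid_ge hk hmid
      omega
    · by_cases hdc2 : ((d1:ℕ)+1, d2) = ((ci:ℕ), cj)
      · obtain ⟨he1, he2⟩ := Prod.mk.injEq .. ▸ hdc2
        show rk n (k+1) (val (d1, d2)) < rk n (k+1) (val (d1+1, d2))
        rw [hdc2, hc_rk, hagree _ hd hdc]
        have hfail : ¬(k ≤ val (d1, d2) ∧ val (d1, d2) < n*(n+1)-1-k) := by
          intro hq
          apply hUc
          refine ⟨by omega, ?_, ?_⟩ <;>
            rw [show ((ci:ℕ)-1, cj) = ((d1:ℕ), d2) from pair_eq_of (by omega) he2.symm] <;>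
            [exact hq.1; exact hq.2]
        have := h.small_rk hk hd hdc hfail
        omega
      · rw [hagree _ hd hdc, hagree _ hd2 hdc2]
        exact h.adjD (d1, d2) hd hd2 hdc hdc2
  exact ⟨h.ub, h.inj, h.surj, pairwise_of_adj hR hD⟩

lemma step_inv (hk : k + 1 ≤ n*(n+1)/2) {val : ℕ×ℕ→ℕ} {c : ℕ×ℕ} (h : Inv n k val c) :
    (microSlide n k (n*(n+1)-1-k) val = val ∧ IsRectSYT n (rk n (k+1)) val) ∨
    (∃ c', Inv n k (microSlide n k (n*(n+1)-1-k) val) c' ∧ c'.1 + c'.2 + 1 = c.1 + c.2 ∧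
      rev n k (n*(n+1)-1-k) (microSlide n k (n*(n+1)-1-k) val) = val) := by
  obtain ⟨ci, cj⟩ := c
  have huniq : ∀ d, inRect n d → val d = n*(n+1)-1-k → d = (ci,cj) := fun d hd hdb =>
    h.inj _ _ hd h.mem (by rw [hdb, h.hole])
  rw [microSlide_spec h.mem h.hole huniq]
  have hunel : ((ci:ℕ)-1, cj) ≠ ((ci:ℕ), cj-1) ∨ ¬(0 < ci) := by
    by_cases h0 : 0 < ci
    · exact Or.inl (pair_ne_fst _ _ (by omega))
    · exact Or.inr h0
  by_cases hQU : 0 < ci ∧ k ≤ val (ci-1,cj) ∧ val (ci-1,cj) < n*(n+1)-1-k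
  · by_cases hQL : 0 < cj ∧ k ≤ val (ci,cj-1) ∧ val (ci,cj-1) < n*(n+1)-1-k
    · rw [if_pos ⟨hQU, hQL⟩]
      by_cases hlt : val (ci, cj-1) < val (ci-1, cj)
      · rw [if_pos hlt]
        obtain ⟨hI, hrev⟩ := up_case hk h hQU.1 hQU.2.1 hQU.2.2 (fun _ _ _ => hlt)
        exact Or.inr ⟨((ci:ℕ)-1, cj), hI, by simp only; omega, hrev⟩
      · rw [if_neg hlt]
        have hci : ci < n := h.mem.1
        have hcj : cj < n + 1 := h.mem.2
        have hne : val ((ci:ℕ)-1, cj) ≠ val ((ci:ℕ), cj-1) := by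
          intro he
          have := h.inj ((ci:ℕ)-1, cj) ((ci:ℕ), cj-1) ⟨by omega, by omega⟩
            ⟨by omega, by omega⟩ he
          exact absurd (congrArg Prod.fst this) (by simp only; omega)
        obtain ⟨hI, hrev⟩ := left_case hk h hQL.1 hQL.2.1 hQL.2.2
          (fun _ _ _ => by omega)
        exact Or.inr ⟨((ci:ℕ), cj-1), hI, by simp only; omega, hrev⟩
    · rw [if_neg (fun hcon => hQL hcon.2), if_pos hQU]
      obtain ⟨hI, hrev⟩ := up_case hk h hQU.1 hQU.2.1 hQU.2.2
        (fun hcj0 hq1 hq2 => absurd ⟨hcj0, hq1, hq2⟩ hQL)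
      exact Or.inr ⟨((ci:ℕ)-1, cj), hI, by simp only; omega, hrev⟩
  · rw [if_neg (fun hcon => hQU hcon.1), if_neg hQU]
    by_cases hQL : 0 < cj ∧ k ≤ val (ci,cj-1) ∧ val (ci,cj-1) < n*(n+1)-1-k
    · rw [if_pos hQL]
      obtain ⟨hI, hrev⟩ := left_case hk h hQL.1 hQL.2.1 hQL.2.2
        (fun hci0 hq1 hq2 => absurd ⟨hci0, hq1, hq2⟩ hQU)
      exact Or.inr ⟨((ci:ℕ), cj-1), hI, by simp only; omega, hrev⟩
    · rw [if_neg hQL]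
      exact Or.inl ⟨rfl, terminal_syt hk h hQU hQL⟩

end FoldProof

namespace FoldProof

variable {n k : ℕ}

lemma init_inv (hk : k + 1 ≤ n*(n+1)/2) {val : ℕ×ℕ→ℕ} (hs : IsRectSYT n (rk n k) val) :
    ∃ c, Inv n k val c ∧ rev n k (n*(n+1)-1-k) val = val := by
  obtain ⟨hub, hinj, hsurj, hord⟩ := hs
  obtain ⟨r, hr⟩ := NN_even n
  have hbN : n*(n+1)-1-k < n*(n+1) := by omega
  obtain ⟨c, hc, hcb⟩ := hsurj _ hbN
  have hrkmax : ∀ d, inRect n d → d ≠ c → rk n k (val d) < rk n k (val c) := by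
    intro d hd hne
    rw [hcb]
    exact rk_b_max hk (hub d hd) (fun hb => hne (hinj d c hd hc (by rw [hb, hcb])))
  have hnd : ¬ inRect n (c.1+1, c.2) := by
    intro hmem
    have h1 := hord c (c.1+1, c.2) hc hmem (Or.inr ⟨rfl, by omega⟩)
    have h2 := hrkmax (c.1+1, c.2) hmem (pair_ne_fst _ _ (by omega))
    omega
  have hnr : ¬ inRect n (c.1, c.2+1) := by
    intro hmem
    have h1 := hord c (c.1, c.2+1) hc hmem (Or.inl ⟨rfl, by omega⟩)
    have h2 := hrkmax (c.1, c.2+1) hmem (pair_ne_snd _ _ (by omega))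
    omega
  have hI : Inv n k val c := by
    constructor
    case mem => exact hc
    case hole => exact hcb
    case ub => exact hub
    case inj => exact hinj
    case surj => exact hsurj
    case adjR =>
      intro d hd hd2 _ _
      exact hord d (d.1, d.2+1) hd hd2 (Or.inl ⟨rfl, by omega⟩)
    case adjD =>
      intro d hd hd2 _ _
      exact hord d (d.1+1, d.2) hd hd2 (Or.inr ⟨rfl, by omega⟩)
    case skipV => intro _ hmem; exact absurd hmem hnd
    case skipH => intro _ hmem; exact absurd hmem hnr
    case midD => intro hmem; exact absurd hmem hnd
    case midR => intro hmem; exact absurd hmem hnr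
  refine ⟨c, hI, ?_⟩
  have huniq : ∀ d, inRect n d → val d = n*(n+1)-1-k → d = c := fun d hd hdb =>
    hinj d c hd hc (by rw [hdb, hcb])
  rw [rev_spec hc hcb huniq]
  have hQD : ¬(c.1+1 < n ∧ k ≤ val (c.1+1, c.2) ∧ val (c.1+1, c.2) < n*(n+1)-1-k) := by
    intro hcon
    exact hnd ⟨hcon.1, hc.2⟩
  have hQR : ¬(c.2+1 < n+1 ∧ k ≤ val (c.1, c.2+1) ∧ val (c.1, c.2+1) < n*(n+1)-1-k) := by
    intro hcon
    exact hnr ⟨hc.1, hcon.1⟩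
  rw [if_neg (fun hcon => hQD hcon.1), if_neg hQD, if_neg hQR]

lemma microSlide_off {lo b : ℕ} {val : ℕ×ℕ→ℕ} {e : ℕ×ℕ} (he : ¬ inRect n e) :
    microSlide n lo b val e = val e := by
  by_cases h : ∃ c, inRect n c ∧ val c = b
  · have hcmem := (Classical.choose_spec h).1
    rw [microSlide, dif_pos h]
    set c := Classical.choose h with hc
    have hec : e ≠ c := fun hee => he (hee ▸ hcmem)
    have hcu : c.1 < n := hcmem.1
    have hcl : c.2 < n + 1 := hcmem.2
    have hu : e ≠ (c.1 - 1, c.2) := fun hee => he (by rw [hee]; exact ⟨by omega, hcl⟩)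
    have hl : e ≠ (c.1, c.2 - 1) := fun hee => he (by rw [hee]; exact ⟨hcu, by omega⟩)
    split_ifs with h1 h2 h3
    · rw [swap_other hec hu]
    · rw [swap_other hec hl]
    · rw [swap_other hec hu]
    · rw [swap_other hec hl]
    · rfl
  · rw [microSlide, dif_neg h]

lemma slide_main (hk : k + 1 ≤ n*(n+1)/2) {val : ℕ×ℕ→ℕ}
    (hs : IsRectSYT n (rk n k) val) :
    IsRectSYT n (rk n (k+1)) (slide n k (n*(n+1)-1-k) val) ∧
    (rev n k (n*(n+1)-1-k))^[n*(n+1)] (slide n k (n*(n+1)-1-k) val) = val := by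
  obtain ⟨c, hI, hrevfix⟩ := init_inv hk hs
  set φ := microSlide n k (n*(n+1)-1-k) with hφ
  set ψ := rev n k (n*(n+1)-1-k) with hψ
  have main : ∀ i : ℕ, (∃ c', Inv n k (φ^[i] val) c' ∧
      ((φ (φ^[i] val) = φ^[i] val ∧ IsRectSYT n (rk n (k+1)) (φ^[i] val)) ∨
        c'.1 + c'.2 + i ≤ c.1 + c.2)) ∧
      ψ^[i] (φ^[i] val) = val := by
    intro i
    induction i with
    | zero => exact ⟨⟨c, hI, Or.inr (by omega)⟩, rfl⟩
    | succ i ih =>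
        obtain ⟨⟨c', hI', hOr⟩, hrev⟩ := ih
        rcases hOr with ⟨hfix, hsyt⟩ | hsum
        · have hstep : φ^[i+1] val = φ^[i] val := by
            rw [Function.iterate_succ_apply', hfix]
          refine ⟨⟨c', by rw [hstep]; exact hI', Or.inl (by rw [hstep]; exact ⟨hfix, hsyt⟩)⟩, ?_⟩
          rw [hstep, Function.iterate_succ_apply', hrev, hrevfix]
        · rcases step_inv hk hI' with ⟨hfix, hsyt⟩ | ⟨c'', hI'', hsum2, hrevstep⟩
          · have hstep : φ^[i+1] val = φ^[i] val := by
              rw [Function.iterate_succ_apply']; exact hfix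
            refine ⟨⟨c', by rw [hstep]; exact hI',
              Or.inl (by rw [hstep]; exact ⟨hfix, hsyt⟩)⟩, ?_⟩
            rw [hstep, Function.iterate_succ_apply', hrev, hrevfix]
          · have hstep : φ^[i+1] val = φ (φ^[i] val) := Function.iterate_succ_apply' φ i val
            rw [← hφ] at hI'' hrevstep
            rw [← hψ] at hrevstep
            refine ⟨⟨c'', by rw [hstep]; exact hI'', Or.inr (by omega)⟩, ?_⟩
            rw [hstep, Function.iterate_succ_apply, hrevstep, hrev]
  obtain ⟨⟨c', hI', hOr⟩, hrev⟩ := main (n*(n+1))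
  have hcsum : c.1 + c.2 < n*(n+1) := by
    have h1 : c.1 < n := hI.mem.1
    have h2 : c.2 < n + 1 := hI.mem.2
    have h3 : 0 < n := by omega
    have h4 : n*(n+1) = n*n + n := by ring
    have h5 : n ≤ n*n := Nat.le_mul_of_pos_left n h3
    omega
  rcases hOr with ⟨_, hsyt⟩ | hsum
  · exact ⟨hsyt, hrev⟩
  · omega

lemma slide_off {val : ℕ×ℕ→ℕ} {e : ℕ×ℕ} (he : ¬ inRect n e) (lo b : ℕ) :
    slide n lo b val e = val e := by
  rw [slide]
  generalize n*(n+1) = t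
  induction t with
  | zero => rfl
  | succ t ih => rw [Function.iterate_succ_apply', microSlide_off he, ih]

end FoldProof

namespace FoldProof

def sig (n m : ℕ) : ℕ := if m % 2 = 1 then m / 2 else n*(n+1) - 1 - m/2

lemma dst_lt {n m : ℕ} (hm : m < n*(n+1)) : dstRank n m < n*(n+1) := by
  obtain ⟨r, hr⟩ := NN_even n; unfold dstRank; split_ifs <;> omega

lemma sig_lt {n m : ℕ} (hm : m < n*(n+1)) : sig n m < n*(n+1) := by
  obtain ⟨r, hr⟩ := NN_even n; unfold sig; split_ifs <;> omega

lemma dst_sig {n m : ℕ} (hm : m < n*(n+1)) : dstRank n (sig n m) = m := by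
  obtain ⟨r, hr⟩ := NN_even n; unfold sig dstRank; split_ifs <;> omega

lemma sig_dst {n m : ℕ} (hm : m < n*(n+1)) : sig n (dstRank n m) = m := by
  obtain ⟨r, hr⟩ := NN_even n; unfold sig dstRank; split_ifs <;> omega

lemma syt_mono {n : ℕ} {r1 r2 : ℕ → ℕ} {val : ℕ×ℕ→ℕ}
    (h : ∀ a b, a < n*(n+1) → b < n*(n+1) → r1 a < r1 b → r2 a < r2 b)
    (hs : IsRectSYT n r1 val) : IsRectSYT n r2 val := by
  obtain ⟨ub, inj, surj, ord⟩ := hs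
  exact ⟨ub, inj, surj, fun c d hc hd hrel => h _ _ (ub c hc) (ub d hd) (ord c d hc hd hrel)⟩

lemma good0_iff_ast {n : ℕ} {val : ℕ×ℕ→ℕ} :
    IsRectSYT n (rk n 0) val ↔ IsRectSYT n (astRank n) val := by
  constructor
  · exact syt_mono (fun a b ha hb h => (rk_zero_iff ha hb).1 h)
  · exact syt_mono (fun a b ha hb h => (rk_zero_iff ha hb).2 h)

lemma good_dst_iff {n : ℕ} {val : ℕ×ℕ→ℕ} :
    IsRectSYT n (rk n (n*(n+1)/2)) val ↔ IsRectSYT n (dstRank n) val := by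
  rw [show rk n (n*(n+1)/2) = dstRank n from funext (rk_M_eq_dst n)]

lemma foldAux_good {n : ℕ} : ∀ k, k ≤ n*(n+1)/2 → ∀ val, IsRectSYT n (rk n 0) val →
    IsRectSYT n (rk n k) (foldAux n k val) ∧
      ∀ e, ¬inRect n e → foldAux n k val e = val e := by
  intro k
  induction k with
  | zero => intro _ val h0; exact ⟨h0, fun e he => rfl⟩
  | succ k ih =>
      intro hk val h0
      obtain ⟨hgood, hoff⟩ := ih (by omega) val h0
      have hfold : foldAux n (k+1) val = slide n k (n*(n+1) - 1 - k) (foldAux n k val) := by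
        show slide n k (n*(n+1) - (k+1)) (foldAux n k val) = _
        rw [show n*(n+1) - (k+1) = n*(n+1) - 1 - k from by omega]
      rw [hfold]
      obtain ⟨hs, _⟩ := slide_main hk hgood
      exact ⟨hs, fun e he => by rw [slide_off he, hoff e he]⟩

lemma foldAux_inj {n : ℕ} : ∀ k, k ≤ n*(n+1)/2 → ∀ x y, IsRectSYT n (rk n 0) x →
    IsRectSYT n (rk n 0) y → foldAux n k x = foldAux n k y → x = y := by
  intro k
  induction k with
  | zero => intro _ x y _ _ he; exact he
  | succ k ih =>
      intro hk x y hx hy he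
      have hgx := (foldAux_good k (by omega) x hx).1
      have hgy := (foldAux_good k (by omega) y hy).1
      refine ih (by omega) x y hx hy ?_
      have h1 := (slide_main hk hgx).2
      have h2 := (slide_main hk hgy).2
      have hfoldx : foldAux n (k+1) x = slide n k (n*(n+1) - 1 - k) (foldAux n k x) := by
        show slide n k (n*(n+1) - (k+1)) (foldAux n k x) = _
        rw [show n*(n+1) - (k+1) = n*(n+1) - 1 - k from by omega]
      have hfoldy : foldAux n (k+1) y = slide n k (n*(n+1) - 1 - k) (foldAux n k y) := by
        show slide n k (n*(n+1) - (k+1)) (foldAux n k y) = _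
        rw [show n*(n+1) - (k+1) = n*(n+1) - 1 - k from by omega]
      rw [hfoldx, hfoldy] at he
      calc foldAux n k x
          = (rev n k (n*(n+1)-1-k))^[n*(n+1)]
            (slide n k (n*(n+1)-1-k) (foldAux n k x)) := h1.symm
        _ = (rev n k (n*(n+1)-1-k))^[n*(n+1)]
            (slide n k (n*(n+1)-1-k) (foldAux n k y)) := by rw [he]
        _ = foldAux n k y := h2

lemma foldMap_good {n : ℕ} {val : ℕ×ℕ→ℕ} (h : IsRectSYT n (astRank n) val) :
    IsRectSYT n (dstRank n) (foldMap n val) ∧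
      ∀ e, ¬inRect n e → foldMap n val e = val e := by
  obtain ⟨hg, hoff⟩ := foldAux_good (n*(n+1)/2) le_rfl val (good0_iff_ast.2 h)
  exact ⟨good_dst_iff.1 hg, hoff⟩

lemma foldMap_inj {n : ℕ} {x y : ℕ×ℕ→ℕ} (hx : IsRectSYT n (astRank n) x)
    (hy : IsRectSYT n (astRank n) y) (he : foldMap n x = foldMap n y) : x = y :=
  foldAux_inj (n*(n+1)/2) le_rfl x y (good0_iff_ast.2 hx) (good0_iff_ast.2 hy) he

end FoldProof

open FoldProof

/-- The folding map `fold : SYT(R) → SYT(R)`, defined by successive jeu de taquin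
slides of the primed entries, is a bijection (from the standard tableaux of the
rectangle for the order `1 < ... < M < M' < ... < 1'` onto those for the order
`1' < 1 < 2' < 2 < ... < M' < M`). -/
theorem fold_bijective (n : ℕ) :
    Set.BijOn (foldMap n)
      {val | IsRectSYT n (astRank n) val}
      {val | IsRectSYT n (dstRank n) val} := by
  refine ⟨fun v hv => (foldMap_good hv).1, fun x hx y hy he => foldMap_inj hx hy he, ?_⟩
  intro w hw
  classical
  set A : Set (ℕ×ℕ→ℕ) :=
    {v | IsRectSYT n (astRank n) v ∧ ∀ e, ¬inRect n e → v e = w e} with hA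
  set B : Set (ℕ×ℕ→ℕ) :=
    {v | IsRectSYT n (dstRank n) v ∧ ∀ e, ¬inRect n e → v e = w e} with hB
  have hmaps : Set.MapsTo (foldMap n) A B := by
    rintro v ⟨hv1, hv2⟩
    exact ⟨(foldMap_good hv1).1, fun e he => ((foldMap_good hv1).2 e he).trans (hv2 e he)⟩
  have hinj : Set.InjOn (foldMap n) A := fun x hx y hy he => foldMap_inj hx.1 hy.1 he
  have hBfin : B.Finite := by
    let G : (Fin n × Fin (n+1) → Fin (n*(n+1)+1)) → (ℕ×ℕ→ℕ) := fun f c =>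
      if hc : c.1 < n ∧ c.2 < n+1 then (f (⟨c.1, hc.1⟩, ⟨c.2, hc.2⟩)).1 else w c
    refine Set.Finite.subset (Set.finite_range G) ?_
    rintro v ⟨hsyt, hoff⟩
    refine ⟨fun p => ⟨v (p.1.1, p.2.1), ?_⟩, ?_⟩
    · have := hsyt.1 (p.1.1, p.2.1) ⟨p.1.2, p.2.2⟩
      omega
    · funext c
      by_cases hc : c.1 < n ∧ c.2 < n+1
      · simp only [G, dif_pos hc]
      · simp only [G, dif_neg hc]
        exact (hoff c (fun hm => hc ⟨hm.1, hm.2⟩)).symm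
  set Φ : (ℕ×ℕ→ℕ) → (ℕ×ℕ→ℕ) := fun v c => if inRect n c then sig n (v c) else v c with hΦ
  have hΦbij : Set.BijOn Φ A B := by
    refine ⟨?_, ?_, ?_⟩
    · rintro v ⟨⟨ub, inj, surj, ord⟩, hoff⟩
      refine ⟨⟨?_, ?_, ?_, ?_⟩, ?_⟩
      · intro c hc
        simp only [hΦ, if_pos hc]
        exact sig_lt (ub c hc)
      · intro c d hc hd he
        simp only [hΦ, if_pos hc, if_pos hd] at he
        refine inj c d hc hd ?_
        rw [← dst_sig (ub c hc), ← dst_sig (ub d hd), he]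
      · intro m hm
        obtain ⟨c, hc, hvc⟩ := surj (dstRank n m) (dst_lt hm)
        refine ⟨c, hc, ?_⟩
        simp only [hΦ, if_pos hc, hvc]
        exact sig_dst hm
      · intro c d hc hd hrel
        simp only [hΦ, if_pos hc, if_pos hd]
        rw [dst_sig (ub c hc), dst_sig (ub d hd)]
        exact ord c d hc hd hrel
      · intro e he
        simp only [hΦ, if_neg he]
        exact hoff e he
    · rintro x ⟨⟨ubx, _, _, _⟩, hoffx⟩ y ⟨⟨uby, _, _, _⟩, hoffy⟩ he
      funext c
      have := congrFun he c
      by_cases hc : inRect n c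
      · simp only [hΦ, if_pos hc] at this
        rw [← dst_sig (ubx c hc), ← dst_sig (uby c hc), this]
      · rw [hoffx c hc, hoffy c hc]
    · rintro v ⟨⟨ub, inj, surj, ord⟩, hoff⟩
      refine ⟨fun c => if inRect n c then dstRank n (v c) else v c, ⟨⟨?_, ?_, ?_, ?_⟩, ?_⟩, ?_⟩
      · intro c hc
        simp only [if_pos hc]
        exact dst_lt (ub c hc)
      · intro c d hc hd he
        simp only [if_pos hc, if_pos hd] at he
        refine inj c d hc hd ?_
        rw [← sig_dst (ub c hc), ← sig_dst (ub d hd), he]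
      · intro m hm
        obtain ⟨c, hc, hvc⟩ := surj (sig n m) (sig_lt hm)
        refine ⟨c, hc, ?_⟩
        simp only [if_pos hc, hvc]
        exact dst_sig hm
      · intro c d hc hd hrel
        have := ord c d hc hd hrel
        show astRank n _ < astRank n _
        simp only [astRank, id, if_pos hc, if_pos hd]
        exact this
      · intro e he
        simp only [if_neg he]
        exact hoff e he
      · funext c
        by_cases hc : inRect n c
        · simp only [hΦ, if_pos hc]
          exact sig_dst (ub c hc)
        · simp only [hΦ, if_neg hc]
  have hsub : foldMap n '' A ⊆ B := Set.MapsTo.image_subset hmaps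
  have hcard : B.ncard ≤ (foldMap n '' A).ncard := by
    rw [Set.ncard_image_of_injOn hinj, ← hΦbij.image_eq,
      Set.ncard_image_of_injOn hΦbij.injOn]
  have heq : foldMap n '' A = B := Set.eq_of_subset_of_ncard_le hsub hcard hBfin
  have hwB : w ∈ B := ⟨hw, fun e he => rfl⟩
  rw [← heq] at hwB
  obtain ⟨v, hvA, hveq⟩ := hwB
  exact ⟨v, hvA.1, hveq⟩
end

section
/- If a nonzero polynomial h(z) ∈ C[z] is even (h(z) = h(-z)) and all its roots lie on a circle Γ in the Riemann sphere CP^1 (with a root at ∞ of multiplicity (deg bound) - deg h if h has degree less than the degree bound), and Γ contains at least 3 of these symmetric root pairs, then Γ is invariant under z ↦ -z; hence Γ is either a line through 0 (a rotation of RP^1, passing through 0 and ∞) or a circle centered at 0 (a dilatation of the unit circle). -/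
open Polynomial

/-- the map `z ↦ -z` on `ℂP¹ = ℂ ∪ {∞}` (with `∞` encoded as `none`) -/
def negPt : Option ℂ → Option ℂ
  | none => none
  | some z => some (-z)

/-- A circle in `ℂP¹`: either a line in `ℂ` together with `∞`, or a Euclidean
circle in `ℂ`. -/
def IsCircleCP1 (Γ : Set (Option ℂ)) : Prop :=
  (∃ p d : ℂ, d ≠ 0 ∧ Γ = {w | w = none ∨ ∃ t : ℝ, w = some (p + (t : ℂ) * d)}) ∨
  (∃ z₀ : ℂ, ∃ r : ℝ, 0 < r ∧ Γ = {w | ∃ z : ℂ, w = some z ∧ ‖z - z₀‖ = r})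

/-!
Roots of an even polynomial come in pairs `±z`. A line containing `z` and `-z` contains their
midpoint `0`. A Euclidean circle cannot contain `∞`, so if it has centre `z₀`, each of the (at
least three) finite roots lies on it and, by the pairing, on the reflected circle with centre
`-z₀`; two distinct circles meet in at most two points, so `z₀ = 0`.
-/

theorem Polynomial.IsRoot.neg_of_comp_neg_X {R : Type*} [CommRing R] {h : R[X]}
    (heven : h.comp (-X) = h) {z : R} (hz : h.IsRoot z) : h.IsRoot (-z) := by
  rwa [IsRoot, ← heven, eval_comp, eval_neg, eval_X, neg_neg]

theorem Function.Involutive.image_eq_of_mapsTo {α : Type*} {f : α → α} (hf : f.Involutive)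
    {S : Set α} (hS : Set.MapsTo f S S) : f '' S = S :=
  (Set.image_subset_iff.mpr hS).antisymm fun x hx => ⟨f x, hS hx, hf x⟩

theorem negPt_involutive : Function.Involutive negPt
  | none => rfl
  | some z => by simp [negPt]

theorem negPt_image_line_through_zero (e : ℂ) :
    negPt '' {w | w = none ∨ ∃ t : ℝ, w = some ((t : ℂ) * e)} =
      {w | w = none ∨ ∃ t : ℝ, w = some ((t : ℂ) * e)} := by
  refine negPt_involutive.image_eq_of_mapsTo ?_
  rintro _ (rfl | ⟨t, rfl⟩)
  · exact Or.inl rfl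
  · exact Or.inr ⟨-t, by simp [negPt]⟩

theorem negPt_image_circle_around_zero (r : ℝ) :
    negPt '' {w | ∃ z : ℂ, w = some z ∧ ‖z‖ = r} = {w | ∃ z : ℂ, w = some z ∧ ‖z‖ = r} := by
  refine negPt_involutive.image_eq_of_mapsTo ?_
  rintro _ ⟨z, rfl, hz⟩
  exact ⟨-z, rfl, by rwa [norm_neg]⟩

theorem line_eq_line_through_zero_of_neg_mem {p d z : ℂ} {t₁ t₂ : ℝ}
    (h₁ : z = p + t₁ * d) (h₂ : -z = p + t₂ * d) :
    {w : Option ℂ | w = none ∨ ∃ t : ℝ, w = some (p + t * d)} =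
      {w | w = none ∨ ∃ t : ℝ, w = some (t * d)} := by
  set s : ℝ := (t₁ + t₂) / 2
  have hp : p = -(s : ℂ) * d := by
    push_cast [s]
    linear_combination (-1 / 2 : ℂ) * (h₁ + h₂)
  ext w
  simp only [Set.mem_ofPred_eq, hp]
  refine or_congr_right ⟨fun ⟨t, ht⟩ => ⟨t - s, ?_⟩, fun ⟨t, ht⟩ => ⟨t + s, ?_⟩⟩
  · rw [ht]; push_cast; ring_nf
  · rw [ht]; push_cast; ring_nf

theorem eq_zero_of_two_lt_ncard_of_norm_eq {s : Set ℂ} (hs : 2 < s.ncard) {z₀ : ℂ} {r : ℝ}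
    (hmem : ∀ z ∈ s, ‖z - z₀‖ = r ∧ ‖-z - z₀‖ = r) : z₀ = 0 := by
  obtain ⟨z₁, z₂, z₃, h₁, h₂, h₃, h₁₂, h₁₃, h₂₃⟩ :=
    (Set.two_lt_ncard_iff (Set.finite_of_ncard_pos (by omega))).mp hs
  by_contra hz₀
  have hc : z₀ ≠ -z₀ := fun h => hz₀ (CharZero.eq_neg_self_iff.mp h)
  have hdist {z} (hz : z ∈ s) : dist z z₀ = r ∧ dist z (-z₀) = r := by
    obtain ⟨h, h'⟩ := hmem z hz
    refine ⟨by rwa [dist_eq_norm], ?_⟩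
    rw [dist_eq_norm, ← h', ← norm_neg]
    congr 1
    ring
  obtain ⟨d₁, d₁'⟩ := hdist h₁
  obtain ⟨d₂, d₂'⟩ := hdist h₂
  obtain ⟨d₃, d₃'⟩ := hdist h₃
  rcases EuclideanGeometry.eq_of_dist_eq_of_dist_eq_of_finrank_eq_two Complex.finrank_real_complex
    hc h₁₂ d₁ d₂ d₃ d₁' d₂' d₃' with h | h
  exacts [h₁₃ h.symm, h₂₃ h.symm]

theorem circle_symmetric_of_even_roots_general (d : ℕ) (h : Polynomial ℂ)
    (heven : h.comp (-Polynomial.X) = h)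
    (Γ : Set (Option ℂ)) (hΓ : IsCircleCP1 Γ) (R : Set (Option ℂ))
    (hR : R = (fun z => (some z : Option ℂ)) '' {z | h.IsRoot z} ∪
      (if h.natDegree < d then {(none : Option ℂ)} else ∅))
    (hsub : R ⊆ Γ) (hcard : 3 ≤ R.ncard) :
    negPt '' Γ = Γ ∧
      ((∃ e : ℂ, e ≠ 0 ∧ Γ = {w | w = none ∨ ∃ t : ℝ, w = some ((t : ℂ) * e)}) ∨
        (∃ r : ℝ, 0 < r ∧ Γ = {w | ∃ z : ℂ, w = some z ∧ ‖z‖ = r})) := by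
  subst hR
  have hpair {z : ℂ} (hz : h.IsRoot z) : some z ∈ Γ ∧ some (-z) ∈ Γ :=
    ⟨hsub (Or.inl ⟨z, hz, rfl⟩), hsub (Or.inl ⟨-z, hz.neg_of_comp_neg_X heven, rfl⟩)⟩
  have hcentred : (∃ e : ℂ, e ≠ 0 ∧ Γ = {w | w = none ∨ ∃ t : ℝ, w = some ((t : ℂ) * e)}) ∨
      (∃ r : ℝ, 0 < r ∧ Γ = {w | ∃ z : ℂ, w = some z ∧ ‖z‖ = r}) := by
    rcases hΓ with ⟨p, e, he, rfl⟩ | ⟨z₀, r, hr, rfl⟩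
    · obtain ⟨_, ⟨z, hz, rfl⟩ | hnone, hne⟩ :=
        Set.exists_ne_of_one_lt_ncard (lt_of_lt_of_le (by norm_num) hcard) none
      · obtain ⟨⟨t₁, ht₁⟩, ⟨t₂, ht₂⟩⟩ :
            (∃ t : ℝ, z = p + t * e) ∧ ∃ t : ℝ, -z = p + t * e := by
          simpa using hpair hz
        exact Or.inl ⟨e, he, line_eq_line_through_zero_of_neg_mem ht₁ ht₂⟩
      · exact absurd ((Set.mem_ite_empty_right _ _ _).mp hnone).2 hne
    · have hno_infinity : ¬ h.natDegree < d := fun hlt => by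
        obtain ⟨_, ⟨⟩, -⟩ := hsub (Or.inr ((Set.mem_ite_empty_right _ _ _).mpr ⟨hlt, rfl⟩))
      rw [if_neg hno_infinity, Set.union_empty,
        Set.ncard_image_of_injective _ (Option.some_injective ℂ)] at hcard
      obtain rfl : z₀ = 0 := eq_zero_of_two_lt_ncard_of_norm_eq hcard fun z hz => by
        obtain ⟨⟨_, ⟨⟩, hz₁⟩, ⟨_, ⟨⟩, hz₂⟩⟩ := hpair hz
        exact ⟨hz₁, hz₂⟩
      exact Or.inr ⟨r, hr, by simp_rw [sub_zero]⟩
  refine ⟨?_, hcentred⟩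
  rcases hcentred with ⟨e, -, rfl⟩ | ⟨r, -, rfl⟩
  exacts [negPt_image_line_through_zero e, negPt_image_circle_around_zero r]

/-- If a nonzero even polynomial `h` (of degree bound `d`) has all its roots —
including a root at `∞` when `deg h < d` — on a circle `Γ` in `ℂP¹`, and the
root set has at least 3 distinct points, then `Γ` is invariant under `z ↦ -z`;
hence `Γ` is either a line through `0` (together with `∞`) or a circle centered
at `0`. -/
theorem circle_symmetric_of_even_roots (d : ℕ) (h : Polynomial ℂ) (hne : h ≠ 0)
    (heven : h.comp (-Polynomial.X) = h) (hdeg : h.natDegree ≤ d)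
    (Γ : Set (Option ℂ)) (hΓ : IsCircleCP1 Γ) (R : Set (Option ℂ))
    (hR : R = (fun z => (some z : Option ℂ)) '' {z | h.IsRoot z} ∪
      (if h.natDegree < d then {(none : Option ℂ)} else ∅))
    (hsub : R ⊆ Γ) (hcard : 3 ≤ R.ncard) :
    negPt '' Γ = Γ ∧
      ((∃ e : ℂ, e ≠ 0 ∧ Γ = {w | w = none ∨ ∃ t : ℝ, w = some ((t : ℂ) * e)}) ∨
        (∃ r : ℝ, 0 < r ∧ Γ = {w | ∃ z : ℂ, w = some z ∧ ‖z‖ = r})) :=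
  circle_symmetric_of_even_roots_general d h heven Γ hΓ R hR hsub hcard
end
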